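/- arXiv:2508.12210 — 6 statements merged into one kernel-verified Lean document; each statement's English description precedes it below -/
import Mathlib

section
/- If G is an n-vertex triangle-free graph with chromatic number at least 3, then e(G) ≤ ⌊(n−1)²/4⌋ + 1. -/
/-!
Since `G` is not bipartite it has an odd cycle; take a shortest one, of length `L = 2k + 1`.
Triangle-freeness gives `L ≥ 5`. By minimality, a vertex adjacent to two cycle vertices sees
them at cycle distance `2` (a shortcut would close a shorter odd walk), so every vertex has at
most two neighbours on the cycle. Hence at most `L` edges lie on the cycle's vertex set and at
most `2 (n - L)` join it to the rest, while Mantel's theorem bounds the remaining edges by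
`(n - L)² / 4`. As `k ≥ 2`, `L + 2 (n - L) + (n - L)² / 4 ≤ (n - 1)² / 4 + 1`.
-/

open Finset

namespace SimpleGraph

variable {V : Type*} {G : SimpleGraph V}

lemma Walk.adj_getVert_mod {u : V} (w : G.Walk u u) (hw : w.length ≠ 0) (i : ℕ) :
    G.Adj (w.getVert (i % w.length)) (w.getVert ((i + 1) % w.length)) := by
  have hi : i % w.length < w.length := Nat.mod_lt _ (Nat.pos_of_ne_zero hw)
  have hadj := w.adj_getVert_succ hi
  rw [← Nat.mod_add_mod]
  rcases (Nat.add_one_le_of_lt hi).lt_or_eq with h | h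
  · rwa [Nat.mod_eq_of_lt h]
  · rw [h, getVert_length] at hadj
    rwa [h, Nat.mod_self, getVert_zero]

lemma exists_walk_length_eq_of_adj_succ {F : ℕ → V} (hF : ∀ i, G.Adj (F i) (F (i + 1)))
    (a m : ℕ) : ∃ p : G.Walk (F a) (F (a + m)), p.length = m := by
  induction m with
  | zero => exact ⟨Walk.nil, rfl⟩
  | succ m ih =>
    obtain ⟨p, hp⟩ := ih
    exact ⟨p.concat (hF (a + m)), by rw [Walk.length_concat, hp]⟩

/-- `F` lists the vertices of a closed walk of length `L`, extended `L`-periodically to `ℕ`. -/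
structure IsShortestOddCycle (G : SimpleGraph V) (F : ℕ → V) (L : ℕ) : Prop where
  odd : Odd L
  adj : ∀ i, G.Adj (F i) (F (i + 1))
  periodic : Function.Periodic F L
  le_length : ∀ u (w : G.Walk u u), Odd w.length → L ≤ w.length

lemma exists_isShortestOddCycle (h : ¬ G.Colorable 2) : ∃ F L, G.IsShortestOddCycle F L := by
  classical
  have hex : ∃ L, Odd L ∧ ∃ u, ∃ w : G.Walk u u, w.length = L := by
    simp only [two_colorable_iff_forall_loop_even, not_forall, Nat.not_even_iff_odd] at h
    obtain ⟨u, w, hw⟩ := h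
    exact ⟨_, hw, u, w, rfl⟩
  obtain ⟨hodd, u, w, hw⟩ := Nat.find_spec hex
  rw [← hw] at hodd
  exact ⟨fun i => w.getVert (i % w.length), w.length, hodd, w.adj_getVert_mod hodd.pos.ne',
    fun i => by simp, fun v p hp => hw ▸ Nat.find_min' hex ⟨hp, v, p, rfl⟩⟩

namespace IsShortestOddCycle

variable {F : ℕ → V} {L : ℕ}

lemma le_length_add_or_le_length_add_sub (hC : G.IsShortestOddCycle F L) {i d : ℕ} (hd : d ≤ L)
    (p : G.Walk (F (i + d)) (F i)) : L ≤ p.length + d ∨ L ≤ p.length + (L - d) := by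
  -- close `p` with either arc of the cycle: as `L` is odd, one of the two walks has odd length
  obtain ⟨q, hq⟩ := exists_walk_length_eq_of_adj_succ hC.adj i d
  obtain ⟨r, hr⟩ := exists_walk_length_eq_of_adj_succ hC.adj (i + d) (L - d)
  have hend : F (i + d + (L - d)) = F i := by
    rw [show i + d + (L - d) = i + L by omega, hC.periodic]
  rcases Nat.even_or_odd (p.length + d) with ⟨a, ha⟩ | hodd
  · right
    obtain ⟨b, hb⟩ := hC.odd
    have h := hC.le_length _ ((r.copy rfl hend).append p.reverse) (by
      rw [Walk.length_append, Walk.length_copy, Walk.length_reverse, hr]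
      exact ⟨b + p.length - a, by omega⟩)
    simpa [hr, add_comm] using h
  · left
    simpa [hq, add_comm] using hC.le_length _ (q.append p) (by simpa [hq, add_comm] using hodd)

lemma injOn (hC : G.IsShortestOddCycle F L) : Set.InjOn F (Set.Iio L) := by
  have key : ∀ {i j}, i < j → j < L → F i ≠ F j := by
    intro i j hij hj h
    have hp : F (i + (j - i)) = F i := by rw [Nat.add_sub_cancel' hij.le, h]
    have := hC.le_length_add_or_le_length_add_sub (by omega : j - i ≤ L)
      (Walk.nil.copy hp.symm rfl)
    simp only [Walk.length_copy, Walk.length_nil, zero_add] at this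
    omega
  intro i hi j hj h
  rcases lt_trichotomy i j with hij | rfl | hij
  exacts [(key hij hj h).elim, rfl, (key hij hi h.symm).elim]

lemma five_le (hC : G.IsShortestOddCycle F L) (hG : G.CliqueFree 3) : 5 ≤ L := by
  have hF0 : F (0 + L) = F 0 := hC.periodic 0
  by_contra! hL
  obtain ⟨k, rfl⟩ := hC.odd
  obtain rfl | rfl : k = 0 ∨ k = 1 := by omega
  · exact G.loopless.irrefl _ (hF0 ▸ hC.adj 0)
  · exact isIndepSet_neighborSet_of_triangleFree G hG (F 0) (hC.adj 0) (hF0 ▸ hC.adj 2).symm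
      (hC.adj 1).ne (hC.adj 1)

lemma sub_eq_two_or_sub_eq_sub_two (hC : G.IsShortestOddCycle F L) (hG : G.CliqueFree 3)
    {x : V} {i j : ℕ} (hij : i < j) (hj : j < L) (hxi : G.Adj x (F i)) (hxj : G.Adj x (F j)) :
    j - i = 2 ∨ j - i = L - 2 := by
  have hnot : ∀ k, G.Adj x (F k) → ¬ G.Adj x (F (k + 1)) := fun k h1 h2 =>
    isIndepSet_neighborSet_of_triangleFree G hG x h1 h2 (hC.adj k).ne (hC.adj k)
  have hd1 : j ≠ i + 1 := by rintro rfl; exact hnot i hxi hxj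
  have hdL : ¬ (i = 0 ∧ j + 1 = L) := by
    rintro ⟨rfl, hjL⟩
    have : F (j + 1) = F 0 := by rw [hjL, ← zero_add L, hC.periodic]
    exact hnot j hxj (this ▸ hxi)
  have hp : F (i + (j - i)) = F j := by rw [Nat.add_sub_cancel' hij.le]
  have := hC.le_length_add_or_le_length_add_sub (by omega : j - i ≤ L)
    ((Walk.cons hxj.symm (Walk.cons hxi Walk.nil)).copy hp.symm rfl)
  simp only [Walk.length_copy, Walk.length_cons, Walk.length_nil] at this
  omega

lemma card_neighborFinset_inter_image_le_two [Fintype V] [DecidableEq V] [DecidableRel G.Adj]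
    (hC : G.IsShortestOddCycle F L) (hG : G.CliqueFree 3) (x : V) :
    #(G.neighborFinset x ∩ (range L).image F) ≤ 2 := by
  have hdist : ∀ {i j}, i < L → j < L → G.Adj x (F i) → G.Adj x (F j) → F i ≠ F j →
      i + 2 = j ∨ j + 2 = i ∨ i + L = j + 2 ∨ j + L = i + 2 := by
    intro i j hi hj hxi hxj hne
    rcases lt_trichotomy i j with h | rfl | h
    · have := hC.sub_eq_two_or_sub_eq_sub_two hG h hj hxi hxj; omega
    · exact absurd rfl hne
    · have := hC.sub_eq_two_or_sub_eq_sub_two hG h hi hxj hxi; omega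
  by_contra! h
  obtain ⟨_, ha, _, hb, _, hc, hab, hac, hbc⟩ := two_lt_card.1 h
  simp only [mem_inter, mem_neighborFinset, mem_image, mem_range] at ha hb hc
  obtain ⟨hxa, a, ha, rfl⟩ := ha
  obtain ⟨hxb, b, hb, rfl⟩ := hb
  obtain ⟨hxc, c, hc, rfl⟩ := hc
  have := hdist ha hb hxa hxb hab
  have := hdist ha hc hxa hxc hac
  have := hdist hb hc hxb hxc hbc
  -- three vertices at pairwise cycle distance `2` would need `L ∈ {2, 3, 6}`
  have := hC.five_le hG
  obtain ⟨k, rfl⟩ := hC.odd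
  omega

end IsShortestOddCycle

lemma CliqueFree.four_mul_card_edgeFinset_le [Fintype V] [DecidableRel G.Adj]
    (h : G.CliqueFree 3) : 4 * #G.edgeFinset ≤ Fintype.card V ^ 2 := by
  have := h.card_edgeFinset_le (r := 2)
  rcases Nat.mod_two_eq_zero_or_one (Fintype.card V) with h2 | h2 <;>
    simp [h2] at this <;> omega

lemma CliqueFree.four_mul_card_edgeFinset_induce_le [Fintype V] [DecidableEq V]
    [DecidableRel G.Adj] (h : G.CliqueFree 3) (T : Finset V) :
    4 * #(G.induce (T : Set V)).edgeFinset ≤ #T ^ 2 := by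
  simpa using (h.comap (Embedding.induce (T : Set V)).isContained).four_mul_card_edgeFinset_le

section induce

variable [Fintype V] [DecidableEq V] [DecidableRel G.Adj]

lemma card_edgeFinset_induce_coe (T : Finset V) :
    #(G.induce (T : Set V)).edgeFinset = #(G.edgeFinset ∩ T.sym2) := by
  have := congrArg card (map_edgeFinset_induce (G := G) (s := (T : Set V)))
  rw [card_map] at this
  convert this using 3; simp

lemma degree_induce_coe (T : Finset V) (v : (T : Set V)) :
    (G.induce (T : Set V)).degree v = #(G.neighborFinset v ∩ T) := by
  have := congrArg card (map_neighborFinset_induce (G := G) (s := (T : Set V)) v)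
  rw [card_map] at this
  rw [← card_neighborFinset_eq_degree]
  convert this using 3; simp

lemma two_mul_card_edgeFinset_induce_le (T : Finset V) {d : ℕ}
    (h : ∀ x ∈ T, #(G.neighborFinset x ∩ T) ≤ d) :
    2 * #(G.induce (T : Set V)).edgeFinset ≤ d * #T := by
  rw [← sum_degrees_eq_twice_card_edges]
  calc ∑ v, (G.induce (T : Set V)).degree v ≤ ∑ _v : (T : Set V), d :=
        sum_le_sum fun v _ => by rw [degree_induce_coe]; exact h v v.2
    _ = d * #T := by simp [mul_comm]

lemma card_edgeFinset_le_of_forall_card_neighborFinset_inter_le_two (S : Finset V)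
    (hS : ∀ x, #(G.neighborFinset x ∩ S) ≤ 2) :
    #G.edgeFinset ≤ #S + 2 * #Sᶜ + #(G.induce (↑Sᶜ : Set V)).edgeFinset := by
  set cross := Sᶜ.biUnion fun x => (G.neighborFinset x ∩ S).image (s(x, ·))
  have hcover :
      G.edgeFinset ⊆ (G.edgeFinset ∩ S.sym2 ∪ cross) ∪ G.edgeFinset ∩ Sᶜ.sym2 := by
    intro e he
    induction e with | _ a b => ?_
    have hab : G.Adj a b := by simpa using he
    by_cases ha : a ∈ S <;> by_cases hb : b ∈ S
    · simp [he, ha, hb]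
    · simp only [cross, mem_union, mem_biUnion, mem_image]
      exact Or.inl <| Or.inr ⟨b, by simpa using hb, a, by simp [hab.symm, ha], Sym2.eq_swap⟩
    · simp only [cross, mem_union, mem_biUnion, mem_image]
      exact Or.inl <| Or.inr ⟨a, by simpa using ha, b, by simp [hab, hb], rfl⟩
    · simp [he, ha, hb]
  have hin : #(G.edgeFinset ∩ S.sym2) ≤ #S := by
    have := two_mul_card_edgeFinset_induce_le S (d := 2) fun x _ => hS x
    rw [card_edgeFinset_induce_coe] at this
    omega
  have hcross : #cross ≤ 2 * #Sᶜ :=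
    calc #cross ≤ ∑ x ∈ Sᶜ, #((G.neighborFinset x ∩ S).image (s(x, ·))) :=
          card_biUnion_le
      _ ≤ ∑ _x ∈ Sᶜ, 2 := sum_le_sum fun x _ => card_image_le.trans (hS x)
      _ = 2 * #Sᶜ := by rw [sum_const, smul_eq_mul, mul_comm]
  calc #G.edgeFinset ≤ #((G.edgeFinset ∩ S.sym2 ∪ cross) ∪ G.edgeFinset ∩ Sᶜ.sym2) :=
        card_le_card hcover
    _ ≤ #(G.edgeFinset ∩ S.sym2) + #cross + #(G.edgeFinset ∩ Sᶜ.sym2) :=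
        (card_union_le _ _).trans (by gcongr; exact card_union_le _ _)
    _ ≤ _ := by rw [card_edgeFinset_induce_coe]; omega

end induce

end SimpleGraph

open SimpleGraph

/-- (Erdős) If `G` is an `n`-vertex triangle-free graph with chromatic number at least 3,
then `e(G) ≤ ⌊(n-1)²/4⌋ + 1`. -/
theorem stmt5 (n : ℕ) (G : SimpleGraph (Fin n)) (hfree : G.CliqueFree 3)
    (hchi : (3 : ℕ∞) ≤ G.chromaticNumber) :
    G.edgeSet.ncard ≤ (n - 1) ^ 2 / 4 + 1 := by
  classical
  have hbip : ¬ G.Colorable 2 := fun h => by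
    have := hchi.trans h.chromaticNumber_le
    norm_num at this
  obtain ⟨F, L, hC⟩ := exists_isShortestOddCycle hbip
  set S := (range L).image F
  have hS : #S = L := by rw [card_image_of_injOn (by simpa using hC.injOn), card_range]
  have hLn : L ≤ n := by simpa [hS] using card_le_univ S
  have hSc : #Sᶜ = n - L := by rw [card_compl, hS, Fintype.card_fin]
  have hcount := card_edgeFinset_le_of_forall_card_neighborFinset_inter_le_two S
    (hC.card_neighborFinset_inter_image_le_two hfree)
  have hmantel := hfree.four_mul_card_edgeFinset_induce_le Sᶜ
  have h5 := hC.five_le hfree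
  obtain ⟨k, rfl⟩ := hC.odd
  have h4 : 4 * #G.edgeFinset ≤ (n - 1) ^ 2 + 4 := by
    rw [show n - 1 = #Sᶜ + 2 * k by omega]
    nlinarith
  rw [← coe_edgeFinset, Set.ncard_coe_finset]
  omega
end

section
/- If G is a triangle-free graph with m edges, then ρ(G) ≤ √m. -/
/-!
Let `A x = t x` with `x ≠ 0` and let `i` maximise `|x i|`. Then `A² x = t² x`, and reading this
equation at `i` gives `t² ≤ (A² 𝟙) i = ∑_{j ~ i} deg j`: the number of edges incident to a
neighbour of `i`. In a triangle-free graph no edge joins two neighbours of `i`, so each such edge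
is counted once, and the sum is at most the number `m` of edges. Hence `t ≤ √m`.
-/

open SimpleGraph

/-- The spectral radius (largest adjacency eigenvalue) of a finite graph. -/
noncomputable def graphSpecRad {V : Type*} [Fintype V] (G : SimpleGraph V) : ℝ :=
  letI := Classical.decRel G.Adj
  sSup {t : ℝ | ∃ x : V → ℝ, x ≠ 0 ∧ (G.adjMatrix ℝ).mulVec x = t • x}

open Finset Matrix

namespace Matrix

variable {n R : Type*} [Fintype n] [Ring R] [LinearOrder R] [IsStrictOrderedRing R]

theorem exists_abs_le_mulVec_one_of_mulVec_eq_smul {M : Matrix n n R} (hM : ∀ i j, 0 ≤ M i j)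
    {x : n → R} (hx : x ≠ 0) {s : R} (hxs : M *ᵥ x = s • x) : ∃ i, |s| ≤ (M *ᵥ 1) i := by
  obtain ⟨v, hv⟩ : ∃ v, x v ≠ 0 := Function.ne_iff.mp hx
  obtain ⟨i, -, hi⟩ := exists_max_image univ (fun v => |x v|) ⟨v, mem_univ v⟩
  have hxi : 0 < |x i| := (abs_pos.mpr hv).trans_le (hi v (mem_univ v))
  refine ⟨i, le_of_mul_le_mul_right ?_ hxi⟩
  calc |s| * |x i| = |∑ j, M i j * x j| := by
        rw [← abs_mul, ← smul_eq_mul, ← Pi.smul_apply, ← hxs, mulVec, dotProduct]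
    _ ≤ ∑ j, M i j * |x j| := by
        refine (abs_sum_le_sum_abs _ _).trans_eq (sum_congr rfl fun j _ => ?_)
        rw [abs_mul, abs_of_nonneg (hM i j)]
    _ ≤ ∑ j, M i j * |x i| :=
        sum_le_sum fun j _ => mul_le_mul_of_nonneg_left (hi j (mem_univ j)) (hM i j)
    _ = (M *ᵥ 1) i * |x i| := by simp [mulVec, dotProduct, sum_mul]

end Matrix

namespace SimpleGraph

variable {V : Type*} (G : SimpleGraph V) [DecidableRel G.Adj]

theorem adjMatrix_apply_nonneg {R : Type*} [Zero R] [One R] [Preorder R] [ZeroLEOneClass R]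
    (i j : V) : 0 ≤ G.adjMatrix R i j := by
  rw [adjMatrix_apply]
  split_ifs
  exacts [zero_le_one, le_rfl]

variable [Fintype V]

theorem adjMatrix_mul_self_mulVec_one_apply [DecidableEq V] {R : Type*} [Semiring R]
    (i : V) :
    ((G.adjMatrix R * G.adjMatrix R) *ᵥ 1) i = ∑ j ∈ G.neighborFinset i, (G.degree j : R) := by
  have hdeg : G.adjMatrix R *ᵥ 1 = fun j => (G.degree j : R) := by
    ext j
    simp
  rw [← mulVec_mulVec, hdeg, adjMatrix_mulVec_apply]

theorem sum_degree_neighborFinset_le_card_edgeFinset [DecidableEq V] (hG : G.CliqueFree 3)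
    (i : V) : ∑ j ∈ G.neighborFinset i, G.degree j ≤ #G.edgeFinset := by
  simp_rw [← card_neighborFinset_eq_degree]
  rw [← card_sigma]
  refine card_le_card_of_injOn (fun p => s(p.1, p.2)) (fun p hp => ?_) ?_
  · simp only [coe_sigma, Set.mem_sigma_iff, mem_coe, mem_neighborFinset] at hp
    simpa using hp.2
  · rintro ⟨j, k⟩ hjk ⟨j', k'⟩ hjk' h
    simp only [coe_sigma, Set.mem_sigma_iff, mem_coe, mem_neighborFinset] at hjk hjk'
    rcases Sym2.eq_iff.mp h with ⟨rfl, rfl⟩ | ⟨rfl, rfl⟩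
    · rfl
    · exact (hG {i, j, k} ((is3Clique_triple_iff).mpr ⟨hjk.1, hjk'.1, hjk.2⟩)).elim

end SimpleGraph

/-- (Nosal) If `G` is a triangle-free graph with `m` edges, then `ρ(G) ≤ √m`. -/
theorem stmt6 {V : Type*} [Fintype V] (G : SimpleGraph V) (hfree : G.CliqueFree 3) :
    graphSpecRad G ≤ Real.sqrt (G.edgeSet.ncard) := by
  classical
  refine Real.sSup_le ?_ (Real.sqrt_nonneg _)
  rintro t ⟨x, hx, hxt⟩
  have hsq : (G.adjMatrix ℝ * G.adjMatrix ℝ) *ᵥ x = t ^ 2 • x := by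
    rw [← mulVec_mulVec, hxt, mulVec_smul, hxt, smul_smul, sq]
  have hnonneg : ∀ i j, 0 ≤ (G.adjMatrix ℝ * G.adjMatrix ℝ) i j := fun i j =>
    sum_nonneg fun k _ => mul_nonneg (G.adjMatrix_apply_nonneg i k) (G.adjMatrix_apply_nonneg k j)
  obtain ⟨i, hi⟩ := Matrix.exists_abs_le_mulVec_one_of_mulVec_eq_smul hnonneg hx hsq
  rw [abs_of_nonneg (sq_nonneg t), G.adjMatrix_mul_self_mulVec_one_apply] at hi
  refine Real.le_sqrt_of_sq_le (hi.trans ?_)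
  rw [Set.ncard_eq_toFinset_card' G.edgeSet, ← Nat.cast_sum]
  exact_mod_cast G.sum_degree_neighborFinset_le_card_edgeFinset hfree i
end

section
/- For every integer r ≥ 2 and every n ≥ 1, if G is an n-vertex K_{r+1}-free graph, then ρ(G) ≤ ρ(T_{n,r}), with equality if and only if G is isomorphic to T_{n,r}. -/
open SimpleGraph

open Finset RealInnerProductSpace Matrix

variable {V : Type*} [Fintype V] [DecidableEq V]

lemma adjH (G : SimpleGraph V) [DecidableRel G.Adj] : (G.adjMatrix ℝ).IsHermitian := by
  rw [Matrix.IsHermitian, Matrix.conjTranspose_eq_transpose_of_trivial]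
  exact G.isSymm_adjMatrix

/-- adjacency action on Euclidean space -/
noncomputable def Am (G : SimpleGraph V) [DecidableRel G.Adj] (x : EuclideanSpace ℝ V) :
    EuclideanSpace ℝ V := WithLp.toLp 2 ((G.adjMatrix ℝ).mulVec x)

lemma Am_apply (G : SimpleGraph V) [DecidableRel G.Adj] (x : EuclideanSpace ℝ V) (i : V) :
    Am G x i = ∑ j, G.adjMatrix ℝ i j * x j := rfl

section Spec
variable [Nonempty V] (G : SimpleGraph V) [DecidableRel G.Adj]

/-- largest adjacency eigenvalue -/
noncomputable def lam : ℝ := ⨆ j, (adjH G).eigenvalues j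

variable {G}

lemma ip_eq (x y : EuclideanSpace ℝ V) : ⟪x, y⟫ = ∑ i, x i * y i := by
  rw [PiLp.inner_apply]; simp [RCLike.inner_apply]
  exact Finset.sum_congr rfl fun i _ => mul_comm _ _

lemma symm_move (x y : EuclideanSpace ℝ V) : ⟪Am G x, y⟫ = ⟪x, Am G y⟫ := by
  simp only [ip_eq, Am_apply, Finset.sum_mul, Finset.mul_sum]
  rw [Finset.sum_comm]
  refine Finset.sum_congr rfl fun i _ => Finset.sum_congr rfl fun j _ => ?_
  have : G.adjMatrix ℝ j i = G.adjMatrix ℝ i j := by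
    conv_lhs => rw [← G.isSymm_adjMatrix (α := ℝ)]
    rfl
  rw [this]; ring

lemma Am_basis (j : V) : Am G ((adjH G).eigenvectorBasis j)
    = (adjH G).eigenvalues j • ((adjH G).eigenvectorBasis j) :=
  by rw [Am, (adjH G).mulVec_eigenvectorBasis j, WithLp.toLp_smul, WithLp.toLp_ofLp]

lemma inner_basis_Am (j : V) (x : EuclideanSpace ℝ V) :
    ⟪(adjH G).eigenvectorBasis j, Am G x⟫
      = (adjH G).eigenvalues j * ⟪(adjH G).eigenvectorBasis j, x⟫ := by
  rw [← symm_move, Am_basis, real_inner_smul_left]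

lemma eig_le_lam (j : V) : (adjH G).eigenvalues j ≤ lam G :=
  le_ciSup (Set.Finite.bddAbove (Set.finite_range _)) j

lemma exists_eig_argmax : ∃ j, (adjH G).eigenvalues j = lam G := by
  obtain ⟨j, hj⟩ := Finite.exists_max (adjH G).eigenvalues
  exact ⟨j, le_antisymm (eig_le_lam j) (ciSup_le hj)⟩

lemma ext_zero {x : EuclideanSpace ℝ V}
    (h : ∀ j, ⟪(adjH G).eigenvectorBasis j, x⟫ = 0) : x = 0 := by
  have := ((adjH G).eigenvectorBasis).repr.map_eq_zero_iff (x := x)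
  rw [← this]
  ext j
  rw [OrthonormalBasis.repr_apply_apply]
  exact h j

lemma rayleigh_le (x : EuclideanSpace ℝ V) : ⟪x, Am G x⟫ ≤ lam G * ⟪x, x⟫ := by
  rw [← OrthonormalBasis.sum_inner_mul_inner ((adjH G).eigenvectorBasis) x,
      ← OrthonormalBasis.sum_inner_mul_inner ((adjH G).eigenvectorBasis) x x, Finset.mul_sum]
  refine Finset.sum_le_sum fun j _ => ?_
  rw [inner_basis_Am, real_inner_comm x]
  have := eig_le_lam (G := G) j
  nlinarith [mul_self_nonneg (⟪(adjH G).eigenvectorBasis j, x⟫ : ℝ)]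

lemma eigen_of_rayleigh_eq {x : EuclideanSpace ℝ V} (h : ⟪x, Am G x⟫ = lam G * ⟪x, x⟫) :
    Am G x = lam G • x := by
  have key : ∀ j, ((adjH G).eigenvalues j - lam G) * ⟪(adjH G).eigenvectorBasis j, x⟫ = 0 := by
    have hsum : ∑ j, (lam G - (adjH G).eigenvalues j)
        * (⟪(adjH G).eigenvectorBasis j, x⟫ * ⟪(adjH G).eigenvectorBasis j, x⟫) = 0 := by
      have e1 : ⟪x, Am G x⟫ = ∑ j, (adjH G).eigenvalues j
          * (⟪(adjH G).eigenvectorBasis j, x⟫ * ⟪(adjH G).eigenvectorBasis j, x⟫) := by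
        rw [← OrthonormalBasis.sum_inner_mul_inner ((adjH G).eigenvectorBasis) x]
        refine Finset.sum_congr rfl fun j _ => ?_
        rw [inner_basis_Am, real_inner_comm x]; ring
      have e2 : ⟪x, x⟫ = ∑ j, ⟪(adjH G).eigenvectorBasis j, x⟫ * ⟪(adjH G).eigenvectorBasis j, x⟫ := by
        rw [← OrthonormalBasis.sum_inner_mul_inner ((adjH G).eigenvectorBasis) x x]
        refine Finset.sum_congr rfl fun j _ => ?_
        rw [real_inner_comm x]
      rw [e1, e2, Finset.mul_sum] at h
      have e3 : ∑ j, (lam G - (adjH G).eigenvalues j)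
          * (⟪(adjH G).eigenvectorBasis j, x⟫ * ⟪(adjH G).eigenvectorBasis j, x⟫)
          = ∑ j, lam G * (⟪(adjH G).eigenvectorBasis j, x⟫ * ⟪(adjH G).eigenvectorBasis j, x⟫)
            - ∑ j, (adjH G).eigenvalues j
              * (⟪(adjH G).eigenvectorBasis j, x⟫ * ⟪(adjH G).eigenvectorBasis j, x⟫) := by
        rw [← Finset.sum_sub_distrib]
        exact Finset.sum_congr rfl fun j _ => by ring
      rw [e3, ← h, sub_self]
    intro j
    have h0 : ∀ j ∈ Finset.univ, 0 ≤ (lam G - (adjH G).eigenvalues j)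
        * (⟪(adjH G).eigenvectorBasis j, x⟫ * ⟪(adjH G).eigenvectorBasis j, x⟫) := by
      intro j _
      exact mul_nonneg (by linarith [eig_le_lam (G := G) j]) (mul_self_nonneg _)
    have hj := (Finset.sum_eq_zero_iff_of_nonneg h0).mp hsum j (Finset.mem_univ j)
    rcases mul_eq_zero.mp hj with h1 | h2
    · nlinarith [h1]
    · rw [mul_self_eq_zero.mp h2, mul_zero]
  have : ∀ j, ⟪(adjH G).eigenvectorBasis j, Am G x - lam G • x⟫ = 0 := by
    intro j
    rw [inner_sub_right, inner_basis_Am, real_inner_smul_right]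
    have := key j
    nlinarith [this]
  have hz := ext_zero this
  rwa [sub_eq_zero] at hz

end Spec


variable {V : Type*} [Fintype V] [DecidableEq V]

section Spec2
variable [Nonempty V] {G : SimpleGraph V} [DecidableRel G.Adj]

lemma ip_Am (x : EuclideanSpace ℝ V) :
    ⟪x, Am G x⟫ = ∑ i, ∑ k, G.adjMatrix ℝ i k * (x i * x k) := by
  simp only [ip_eq, Am_apply, Finset.mul_sum]
  exact Finset.sum_congr rfl fun i _ => Finset.sum_congr rfl fun k _ => by ring

lemma exists_nonneg_eigvec :
    ∃ x : EuclideanSpace ℝ V, (∀ i, 0 ≤ x i) ∧ ⟪x, x⟫ = 1 ∧ Am G x = lam G • x := by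
  obtain ⟨j, hj⟩ := exists_eig_argmax (G := G)
  set u : EuclideanSpace ℝ V := (adjH G).eigenvectorBasis j with hu_def
  have hnorm : ⟪u, u⟫ = 1 := by
    rw [real_inner_self_eq_norm_mul_norm, (adjH G).eigenvectorBasis.orthonormal.1 j, one_mul]
  have hu : Am G u = lam G • u := by rw [Am_basis, hj]
  set y : EuclideanSpace ℝ V := WithLp.toLp 2 (fun i => |u i| : V → ℝ) with hy_def
  have hyy : ⟪y, y⟫ = 1 := by
    rw [ip_eq, ← hnorm, ip_eq]
    exact Finset.sum_congr rfl fun i _ => abs_mul_abs_self _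
  have h1 : ⟪u, Am G u⟫ = lam G := by rw [hu, real_inner_smul_right, hnorm, mul_one]
  have h2 : ⟪u, Am G u⟫ ≤ ⟪y, Am G y⟫ := by
    rw [ip_Am, ip_Am]
    refine Finset.sum_le_sum fun i _ => Finset.sum_le_sum fun k _ => ?_
    have hA : (0:ℝ) ≤ G.adjMatrix ℝ i k := by
      rw [SimpleGraph.adjMatrix_apply]; split <;> norm_num
    refine mul_le_mul_of_nonneg_left ?_ hA
    calc u i * u k ≤ |u i * u k| := le_abs_self _
      _ = |u i| * |u k| := abs_mul _ _
  have h3 : ⟪y, Am G y⟫ ≤ lam G := by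
    have := rayleigh_le (G := G) y; rwa [hyy, mul_one] at this
  have heq : ⟪y, Am G y⟫ = lam G * ⟪y, y⟫ := by rw [hyy, mul_one]; linarith
  exact ⟨y, fun i => abs_nonneg _, hyy, eigen_of_rayleigh_eq heq⟩

lemma isGreatest_lam :
    IsGreatest {t : ℝ | ∃ x : V → ℝ, x ≠ 0 ∧ (G.adjMatrix ℝ).mulVec x = t • x} (lam G) := by
  constructor
  · obtain ⟨x, _, hx1, hx2⟩ := exists_nonneg_eigvec (G := G)
    refine ⟨x, fun h0 => ?_, congrArg WithLp.ofLp hx2⟩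
    rw [show x = (0 : EuclideanSpace ℝ V) from congrArg (WithLp.toLp 2) h0] at hx1
    simp [ip_eq] at hx1
  · rintro t ⟨x, hx0, hx⟩
    by_cases hc : ∀ j, ⟪(adjH G).eigenvectorBasis j, (WithLp.toLp 2 x)⟫ = 0
    · exact absurd (congrArg WithLp.ofLp (ext_zero hc)) hx0
    · push_neg at hc
      obtain ⟨j, hj⟩ := hc
      have h1 : ⟪(adjH G).eigenvectorBasis j, Am G (WithLp.toLp 2 x)⟫
          = (adjH G).eigenvalues j * ⟪(adjH G).eigenvectorBasis j, (WithLp.toLp 2 x)⟫ :=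
        inner_basis_Am j (WithLp.toLp 2 x)
      have h2 : Am G (WithLp.toLp 2 x) = t • (WithLp.toLp 2 x) := congrArg (WithLp.toLp 2) hx
      rw [h2, real_inner_smul_right] at h1
      have : t = (adjH G).eigenvalues j := by
        have := mul_right_cancel₀ hj h1
        exact this
      rw [this]; exact eig_le_lam j

lemma graphSpecRad_eq_lam : graphSpecRad G = lam G := by
  have hinst : (Classical.decRel G.Adj) = ‹DecidableRel G.Adj› :=
    funext fun a => funext fun b => Subsingleton.elim _ _
  rw [graphSpecRad]
  rw [hinst]
  exact isGreatest_lam.csSup_eq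

end Spec2

/-- quadratic form of a graph -/
def Qf (G : SimpleGraph V) [DecidableRel G.Adj] (x : V → ℝ) : ℝ :=
  ∑ a, ∑ b, (if G.Adj a b then x a * x b else 0)

/-- neighbourhood sum -/
def rowS (G : SimpleGraph V) [DecidableRel G.Adj] (x : V → ℝ) (t : V) : ℝ :=
  ∑ b, (if G.Adj t b then x b else 0)

variable {G : SimpleGraph V} [DecidableRel G.Adj]

lemma rowS_eq_Am [Nonempty V] (x : EuclideanSpace ℝ V) (t : V) : rowS G x t = Am G x t := by
  rw [rowS, Am_apply]
  exact Finset.sum_congr rfl fun b _ => by rw [SimpleGraph.adjMatrix_apply]; split <;> simp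

lemma ip_Am_eq_Qf [Nonempty V] (x : EuclideanSpace ℝ V) : ⟪x, Am G x⟫ = Qf G x := by
  rw [ip_Am, Qf]
  exact Finset.sum_congr rfl fun i _ => Finset.sum_congr rfl fun k _ => by
    rw [SimpleGraph.adjMatrix_apply]; split <;> simp

lemma Qf_split (t : V) (x : V → ℝ) :
    Qf G x = (∑ a ∈ univ.erase t, ∑ b ∈ univ.erase t, (if G.Adj a b then x a * x b else 0))
      + 2 * (x t * rowS G x t) := by
  have h1 : Qf G x = (∑ b, (if G.Adj t b then x t * x b else 0))
      + ∑ a ∈ univ.erase t, ∑ b, (if G.Adj a b then x a * x b else 0) := by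
    rw [Qf, ← Finset.add_sum_erase _ _ (mem_univ t)]
  have h2 : ∀ a, (∑ b, (if G.Adj a b then x a * x b else 0))
      = (if G.Adj a t then x a * x t else 0) + ∑ b ∈ univ.erase t, (if G.Adj a b then x a * x b else 0) := by
    intro a; rw [← Finset.add_sum_erase _ _ (mem_univ t)]
  have h3 : (∑ b, (if G.Adj t b then x t * x b else 0)) = x t * rowS G x t := by
    rw [rowS, Finset.mul_sum]
    exact Finset.sum_congr rfl fun b _ => by split <;> simp
  have h4 : (∑ a ∈ univ.erase t, (if G.Adj a t then x a * x t else 0)) = x t * rowS G x t := by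
    rw [rowS, Finset.mul_sum,
        ← Finset.sum_erase (s := univ) (f := fun i => x t * if G.Adj t i then x i else 0) (a := t) (by simp)]
    refine Finset.sum_congr rfl fun b hb => ?_
    by_cases h : G.Adj b t
    · rw [if_pos h, if_pos h.symm]; ring
    · rw [if_neg h, if_neg (fun hh => h hh.symm), mul_zero]
  calc Qf G x = x t * rowS G x t + ∑ a ∈ univ.erase t,
        ((if G.Adj a t then x a * x t else 0) + ∑ b ∈ univ.erase t, (if G.Adj a b then x a * x b else 0)) := by
        rw [h1, h3]; congr 1; exact Finset.sum_congr rfl fun a _ => h2 a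
    _ = x t * rowS G x t + (x t * rowS G x t
        + ∑ a ∈ univ.erase t, ∑ b ∈ univ.erase t, (if G.Adj a b then x a * x b else 0)) := by
        rw [Finset.sum_add_distrib, h4]
    _ = _ := by ring
section SEC3
variable {V : Type*} [Fintype V] [DecidableEq V] {G : SimpleGraph V} [DecidableRel G.Adj]
  {s t : V}

lemma rowS_replaceVertex (hst : s ≠ t) (x : V → ℝ) :
    rowS (G.replaceVertex s t) x t = rowS G x s - (if G.Adj s t then x t else 0) := by
  have h1 : rowS (G.replaceVertex s t) x t
      = ∑ b ∈ univ.erase t, (if G.Adj s b then x b else 0) := by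
    rw [rowS, ← Finset.sum_erase (s := univ) (a := t)
      (f := fun b => if (G.replaceVertex s t).Adj t b then x b else 0) (by simp)]
    refine Finset.sum_congr rfl fun b hb => ?_
    have hb' : b ≠ t := (Finset.mem_erase.mp hb).1
    by_cases h : G.Adj s b
    · rw [if_pos ((G.adj_replaceVertex_iff_of_ne_right s hb').mpr h), if_pos h]
    · rw [if_neg (fun hh => h ((G.adj_replaceVertex_iff_of_ne_right s hb').mp hh)), if_neg h]
  have h2 : rowS G x s = (if G.Adj s t then x t else 0)
      + ∑ b ∈ univ.erase t, (if G.Adj s b then x b else 0) := by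
    rw [rowS, ← Finset.add_sum_erase _ _ (mem_univ t)]
  rw [h1, h2]; ring

lemma Qf_replaceVertex (hst : s ≠ t) (x : V → ℝ) :
    Qf (G.replaceVertex s t) x = Qf G x
      + 2 * (x t * (rowS G x s - (if G.Adj s t then x t else 0) - rowS G x t)) := by
  rw [Qf_split t, Qf_split t (x := x) (G := G), rowS_replaceVertex hst]
  have hD : (∑ a ∈ univ.erase t, ∑ b ∈ univ.erase t,
        (if (G.replaceVertex s t).Adj a b then x a * x b else 0))
      = ∑ a ∈ univ.erase t, ∑ b ∈ univ.erase t, (if G.Adj a b then x a * x b else 0) := by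
    refine Finset.sum_congr rfl fun a ha => Finset.sum_congr rfl fun b hb => ?_
    simp only [G.adj_replaceVertex_iff_of_ne s (Finset.mem_erase.mp ha).1 (Finset.mem_erase.mp hb).1]
  rw [hD]; ring

lemma Qf_bot (x : V → ℝ) : Qf (⊥ : SimpleGraph V) x = 0 := by simp [Qf]

lemma Qf_sup_edge (hn : ¬G.Adj s t) (hst : s ≠ t) (x : V → ℝ) :
    Qf (G ⊔ edge s t) x = Qf G x + 2 * (x s * x t) := by
  have hterm : ∀ a b : V, (if (G ⊔ edge s t).Adj a b then x a * x b else 0)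
      = (if G.Adj a b then x a * x b else 0)
        + ((if a = s ∧ b = t then x a * x b else 0) + (if a = t ∧ b = s then x a * x b else 0)) := by
    intro a b
    simp only [sup_adj, edge_adj]
    by_cases h : G.Adj a b
    · have hns : ¬(a = s ∧ b = t) := fun hh => hn (hh.1 ▸ hh.2 ▸ h)
      have hnt : ¬(a = t ∧ b = s) := fun hh => hn (G.adj_symm (hh.1 ▸ hh.2 ▸ h))
      rw [if_pos (Or.inl h), if_pos h, if_neg hns, if_neg hnt]
      ring
    · by_cases h2 : a = s ∧ b = t
      · have hne : a ≠ b := by rw [h2.1, h2.2]; exact hst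
        have hnt : ¬(a = t ∧ b = s) := fun hh => hst (h2.1.symm.trans hh.1)
        rw [if_pos (Or.inr ⟨Or.inl h2, hne⟩), if_neg h, if_pos h2, if_neg hnt]
        ring
      · by_cases h3 : a = t ∧ b = s
        · have hne : a ≠ b := by rw [h3.1, h3.2]; exact hst.symm
          have hns : ¬(a = s ∧ b = t) := fun hh => hst (hh.1.symm.trans h3.1)
          rw [if_pos (Or.inr ⟨Or.inr h3, hne⟩), if_neg h, if_neg hns, if_pos h3]
          ring
        · rw [if_neg ?_, if_neg h, if_neg h2, if_neg h3]
          · ring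
          · rintro (hh | ⟨(hh | hh), -⟩)
            · exact h hh
            · exact h2 hh
            · exact h3 hh
  have e1 : (∑ a, ∑ b, (if a = s ∧ b = t then x a * x b else 0)) = x s * x t := by
    simp [ite_and, Finset.sum_ite_eq']
  have e2 : (∑ a, ∑ b, (if a = t ∧ b = s then x a * x b else 0)) = x t * x s := by
    simp [ite_and, Finset.sum_ite_eq']
  calc Qf (G ⊔ edge s t) x
      = ∑ a, ∑ b, ((if G.Adj a b then x a * x b else 0)
        + ((if a = s ∧ b = t then x a * x b else 0) + (if a = t ∧ b = s then x a * x b else 0))) := by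
        rw [Qf]; exact Finset.sum_congr rfl fun a _ => Finset.sum_congr rfl fun b _ => hterm a b
    _ = Qf G x + ((∑ a, ∑ b, (if a = s ∧ b = t then x a * x b else 0))
          + ∑ a, ∑ b, (if a = t ∧ b = s then x a * x b else 0)) := by
        rw [Qf]; simp [Finset.sum_add_distrib]
    _ = Qf G x + 2 * (x s * x t) := by rw [e1, e2]; ring

lemma rowS_update (x : V → ℝ) (c : ℝ) :
    rowS G (Function.update x t c) t = rowS G x t := by
  refine Finset.sum_congr rfl fun b _ => ?_
  by_cases hb : b = t
  · subst hb; rw [if_neg (G.loopless.irrefl b), if_neg (G.loopless.irrefl b)]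
  · rw [Function.update_of_ne hb]

lemma Qf_update (x : V → ℝ) (c : ℝ) :
    Qf G (Function.update x t c) = Qf G x + 2 * ((c - x t) * rowS G x t) := by
  rw [Qf_split t, Qf_split t (x := x), rowS_update]
  have hD : (∑ a ∈ univ.erase t, ∑ b ∈ univ.erase t,
        (if G.Adj a b then Function.update x t c a * Function.update x t c b else 0))
      = ∑ a ∈ univ.erase t, ∑ b ∈ univ.erase t, (if G.Adj a b then x a * x b else 0) := by
    refine Finset.sum_congr rfl fun a ha => Finset.sum_congr rfl fun b hb => ?_
    rw [Function.update_of_ne (Finset.mem_erase.mp ha).1,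
        Function.update_of_ne (Finset.mem_erase.mp hb).1]
  rw [hD, Function.update_self]; ring

def sumSq (x : V → ℝ) : ℝ := ∑ i, x i * x i

lemma ip_self_eq_sumSq [Nonempty V] (x : EuclideanSpace ℝ V) : ⟪x, x⟫ = sumSq x := ip_eq x x

lemma sumSq_update (x : V → ℝ) (c : ℝ) :
    sumSq (Function.update x t c) = sumSq x - x t * x t + c * c := by
  rw [sumSq, sumSq, ← Finset.add_sum_erase _ _ (mem_univ t), ← Finset.add_sum_erase _ (fun i => x i * x i) (mem_univ t),
    Function.update_self]
  have : (∑ i ∈ univ.erase t, Function.update x t c i * Function.update x t c i)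
      = ∑ i ∈ univ.erase t, x i * x i :=
    Finset.sum_congr rfl fun i hi => by rw [Function.update_of_ne (Finset.mem_erase.mp hi).1]
  rw [this]; ring

lemma rowS_eigen [Nonempty V] {x : EuclideanSpace ℝ V} (hx : Am G x = lam G • x) (v : V) :
    rowS G x v = lam G * x v := by
  rw [rowS_eq_Am, hx]; rfl

lemma lam_lt_of_Qf [Nonempty V] {H : SimpleGraph V} [DecidableRel H.Adj] {y : V → ℝ} {c : ℝ}
    (hy : 0 < sumSq y) (h : c * sumSq y < Qf H y) : c < lam H := by
  have h2 := rayleigh_le (G := H) (x := (WithLp.toLp 2 y))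
  rw [ip_Am_eq_Qf, ip_self_eq_sumSq] at h2
  change Qf H y ≤ lam H * sumSq y at h2
  nlinarith

lemma lam_le_of_Qf [Nonempty V] {H : SimpleGraph V} [DecidableRel H.Adj] {y : V → ℝ} {c : ℝ}
    (hy : 0 < sumSq y) (h : c * sumSq y ≤ Qf H y) : c ≤ lam H := by
  have h2 := rayleigh_le (G := H) (x := (WithLp.toLp 2 y))
  rw [ip_Am_eq_Qf, ip_self_eq_sumSq] at h2
  change Qf H y ≤ lam H * sumSq y at h2
  nlinarith

end SEC3

section ISO
variable {V' W' : Type*} [Fintype V'] [Fintype W']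

lemma specSet_iso_subset {G' : SimpleGraph V'} {H' : SimpleGraph W'}
    [DecidableRel G'.Adj] [DecidableRel H'.Adj] (e' : G' ≃g H') (t : ℝ)
    (ht : ∃ x : V' → ℝ, x ≠ 0 ∧ (G'.adjMatrix ℝ).mulVec x = t • x) :
    ∃ y : W' → ℝ, y ≠ 0 ∧ (H'.adjMatrix ℝ).mulVec y = t • y := by
  obtain ⟨x, hx0, hx⟩ := ht
  refine ⟨x ∘ e'.symm, fun h0 => hx0 (funext fun v => by
    simpa using congrFun h0 (e' v)), funext fun a => ?_⟩
  have step : ((H'.adjMatrix ℝ).mulVec (x ∘ e'.symm)) a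
      = ((G'.adjMatrix ℝ).mulVec x) (e'.symm a) := by
    simp only [Matrix.mulVec, dotProduct, Function.comp_apply]
    refine Fintype.sum_equiv e'.symm.toEquiv _ _ fun c => ?_
    have hiff : H'.Adj a c ↔ G'.Adj (e'.symm a) (e'.symm c) := (e'.symm.map_adj_iff).symm
    rw [SimpleGraph.adjMatrix_apply, SimpleGraph.adjMatrix_apply]
    exact congrArg (· * x (e'.symm c)) (if_congr hiff rfl rfl)
  rw [step, congrFun hx (e'.symm a)]
  rfl

lemma graphSpecRad_iso {G' : SimpleGraph V'} {H' : SimpleGraph W'} (e : G' ≃g H') :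
    graphSpecRad G' = graphSpecRad H' := by
  letI := Classical.decRel G'.Adj
  letI := Classical.decRel H'.Adj
  unfold graphSpecRad
  congr 1
  ext t
  simp only [Set.mem_setOf_eq]
  exact ⟨fun h => specSet_iso_subset e t h, fun h => specSet_iso_subset e.symm t h⟩

end ISO
section CORE

variable {V : Type*} [Fintype V] [DecidableEq V]

lemma rowS_replaceVertex_other {G : SimpleGraph V} [DecidableRel G.Adj] {s t a : V}
    (hat : a ≠ t) (x : V → ℝ) :
    rowS (G.replaceVertex s t) x a
      = rowS G x a - (if G.Adj a t then x t else 0) + (if G.Adj s a then x t else 0) := by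
  have hsplit : ∀ (H : SimpleGraph V) (_ : DecidableRel H.Adj), rowS H x a
      = (if H.Adj a t then x t else 0) + ∑ b ∈ univ.erase t, (if H.Adj a b then x b else 0) := by
    intro H _
    rw [rowS, ← Finset.add_sum_erase _ _ (mem_univ t)]
  rw [hsplit (G.replaceVertex s t) inferInstance, hsplit G inferInstance]
  have h1 : (if (G.replaceVertex s t).Adj a t then x t else 0)
      = (if G.Adj s a then x t else 0) := by
    by_cases h : G.Adj s a
    · rw [if_pos, if_pos h]
      rw [adj_comm]
      exact (G.adj_replaceVertex_iff_of_ne_right s hat).mpr h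
    · rw [if_neg, if_neg h]
      intro hh
      rw [adj_comm] at hh
      exact h ((G.adj_replaceVertex_iff_of_ne_right s hat).mp hh)
  have h2 : (∑ b ∈ univ.erase t, (if (G.replaceVertex s t).Adj a b then x b else 0))
      = ∑ b ∈ univ.erase t, (if G.Adj a b then x b else 0) := by
    refine Finset.sum_congr rfl fun b hb => ?_
    simp only [G.adj_replaceVertex_iff_of_ne s hat (Finset.mem_erase.mp hb).1]
  rw [h1, h2]
  ring

lemma lam_congr (G : SimpleGraph V)
    (i1 i2 : DecidableRel G.Adj) : @lam V _ _ G i1 = @lam V _ _ G i2 := by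
  have h : i1 = i2 := by
    funext a b; exact Subsingleton.elim _ _
  rw [h]

end CORE

set_option maxHeartbeats 4000000 in
theorem maximizer_iso {n r : ℕ} (hr : 2 ≤ r) (G : SimpleGraph (Fin n))
    [Nonempty (Fin n)] [DecidableRel G.Adj] (hfree : G.CliqueFree (r + 1))
    (hmax : ∀ (H : SimpleGraph (Fin n)) [DecidableRel H.Adj],
      H.CliqueFree (r + 1) → lam H ≤ lam G) :
    Nonempty (G ≃g turanGraph n r) := by
  by_cases hcomp : ∀ u v : Fin n, u ≠ v → G.Adj u v
  · -- G is complete; then n ≤ r and both graphs are ⊤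
    have hGtop : G = ⊤ := by
      ext u v
      exact ⟨fun h => h.ne, fun h => hcomp u v h⟩
    have hnr : n ≤ r := by
      by_contra hlt
      push_neg at hlt
      have hemb : (⊤ : SimpleGraph (Fin (r + 1))) ↪g (⊤ : SimpleGraph (Fin n)) :=
        SimpleGraph.Embedding.completeGraph (Fin.castLEEmb hlt)
      exact not_cliqueFree_of_top_embedding hemb.isContained (hGtop ▸ hfree)
    have hT : turanGraph n r = ⊤ := turanGraph_eq_top.mpr (Or.inr hnr)
    rw [hGtop, hT]
    exact ⟨Iso.refl⟩
  push_neg at hcomp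
  obtain ⟨u₀, v₀, hne₀, hnadj₀⟩ := hcomp
  -- step 0 : lam G ≥ 1
  have hlam1 : (1:ℝ) ≤ lam G := by
    have hbotfree : ((⊥ : SimpleGraph (Fin n)) ⊔ edge u₀ v₀).CliqueFree (r + 1) :=
      (cliqueFree_bot hr).sup_edge u₀ v₀
    set y : Fin n → ℝ := Function.update (Function.update (0 : Fin n → ℝ) u₀ 1) v₀ 1 with hy
    have hyu : y u₀ = 1 := by rw [hy, Function.update_of_ne hne₀, Function.update_self]
    have hyv : y v₀ = 1 := by rw [hy, Function.update_self]
    have hsq : sumSq y = 2 := by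
      rw [hy, sumSq_update, sumSq_update, Function.update_of_ne hne₀.symm]
      simp [sumSq]
      norm_num
    have hQ : Qf ((⊥ : SimpleGraph (Fin n)) ⊔ edge u₀ v₀) y = 2 := by
      rw [Qf_sup_edge (by simp) hne₀, Qf_bot, hyu, hyv]; ring
    have h1 : (1:ℝ) ≤ lam ((⊥ : SimpleGraph (Fin n)) ⊔ edge u₀ v₀) := by
      apply lam_le_of_Qf (y := y)
      · rw [hsq]; norm_num
      · rw [hsq, hQ]; norm_num
    exact h1.trans (hmax _ hbotfree)
  have hlampos : (0:ℝ) < lam G := lt_of_lt_of_le one_pos hlam1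
  -- Perron eigenvector
  obtain ⟨x, hxnn, hxx, hxe⟩ := exists_nonneg_eigvec (G := G)
  rw [ip_self_eq_sumSq] at hxx
  have hrow : ∀ v, rowS G x v = lam G * x v := rowS_eigen hxe
  have hQG : Qf G x = lam G := by
    rw [← ip_Am_eq_Qf, hxe, real_inner_smul_right, ip_self_eq_sumSq, hxx, mul_one]
  -- step 1 : positivity of x
  have hxpos : ∀ v, 0 < x v := by
    intro v
    rcases lt_or_eq_of_le (hxnn v) with h | h
    · exact h
    exfalso
    have hxv : x v = 0 := h.symm
    have hu : ∃ u, x u ≠ 0 := by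
      by_contra hz
      push_neg at hz
      rw [sumSq, Finset.sum_eq_zero (fun i _ => by rw [hz i, mul_zero])] at hxx
      norm_num at hxx
    obtain ⟨u, hu0⟩ := hu
    have hupos : 0 < x u := lt_of_le_of_ne (hxnn u) (Ne.symm hu0)
    have huv : u ≠ v := fun h => hu0 (h ▸ hxv)
    have hfree' := hfree.replaceVertex u v
    have hQ' : Qf (G.replaceVertex u v) x = lam G := by
      rw [Qf_replaceVertex huv, hQG, hxv]; ring
    have hQy : Qf (G.replaceVertex u v) (Function.update x v (x u))
        = lam G + 2 * (x u * (lam G * x u)) := by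
      rw [Qf_update, hQ', rowS_replaceVertex huv, hrow]
      simp only [hxv, ite_self, sub_zero]
      try ring
    have hsqy : sumSq (Function.update x v (x u)) = 1 + x u * x u := by
      rw [sumSq_update, hxx, hxv]; ring
    have hlt : lam G * sumSq (Function.update x v (x u))
        < Qf (G.replaceVertex u v) (Function.update x v (x u)) := by
      rw [hsqy, hQy]
      nlinarith [hupos, hlam1]
    have := lam_lt_of_Qf (by rw [hsqy]; nlinarith [hupos]) hlt
    exact absurd (hmax _ hfree') (not_le.mpr this)
  -- step 2 : nonadjacent vertices have equal weight
  have hstep2' : ∀ u v : Fin n, ¬G.Adj u v → ¬(x v < x u) := by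
    intro u v hna hlt
    have huv : u ≠ v := fun h => by rw [h] at hlt; exact lt_irrefl _ hlt
    have hfree' := hfree.replaceVertex u v
    have hQy : Qf (G.replaceVertex u v) x
        = lam G + 2 * (x v * (lam G * x u - lam G * x v)) := by
      rw [Qf_replaceVertex huv, hQG, if_neg hna, hrow, hrow]
      ring
    have hlt2 : lam G * sumSq x < Qf (G.replaceVertex u v) x := by
      rw [hxx, hQy]
      nlinarith [mul_pos (mul_pos (hxpos v) hlampos) (sub_pos.mpr hlt)]
    have := lam_lt_of_Qf (by rw [hxx]; norm_num) hlt2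
    exact absurd (hmax _ hfree') (not_le.mpr this)
  have hstep2 : ∀ u v : Fin n, ¬G.Adj u v → x u = x v := by
    intro u v hna
    have h1 := hstep2' u v hna
    have h2 := hstep2' v u (fun h => hna h.symm)
    push_neg at h1 h2
    exact le_antisymm h1 h2
  -- step 3 : transitivity of nonadjacency
  have htrans : ∀ u v w : Fin n, ¬G.Adj u v → ¬G.Adj v w → ¬G.Adj u w := by
    intro u v w huv hvw hadj
    have huw : u ≠ w := G.ne_of_adj hadj
    have hunv : u ≠ v := fun h => hvw (h ▸ hadj)
    have hwnv : w ≠ v := fun h => huv (h ▸ hadj)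
    have hx1 : x u = x v := hstep2 u v huv
    have hx2 : x v = x w := hstep2 v w hvw
    have hcpos : 0 < x u := hxpos u
    have hfree₁ := hfree.replaceVertex v u
    have hQ₁ : Qf (G.replaceVertex v u) x = lam G := by
      rw [Qf_replaceVertex hunv.symm, hQG, if_neg (fun h => huv h.symm), hrow, hrow,
        ← hx1]
      ring
    have hfree₂ := hfree₁.replaceVertex v w
    have hrow₁v : rowS (G.replaceVertex v u) x v = lam G * x v := by
      rw [rowS_replaceVertex_other (fun h => hunv h.symm) x, hrow,
        if_neg (fun h => huv h.symm), if_neg (G.loopless.irrefl v)]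
      ring
    have hrow₁w : rowS (G.replaceVertex v u) x w = lam G * x w - x u := by
      rw [rowS_replaceVertex_other (fun h => huw h.symm) x, hrow,
        if_pos hadj.symm, if_neg hvw]
      ring
    have hadj₁vw : ¬(G.replaceVertex v u).Adj v w := by
      rw [G.adj_replaceVertex_iff_of_ne v (fun h => hunv h.symm) (fun h => huw h.symm)]
      exact hvw
    have hQ₂ : Qf ((G.replaceVertex v u).replaceVertex v w) x
        = lam G + 2 * (x w * x u) := by
      rw [Qf_replaceVertex hwnv.symm, hQ₁, if_neg hadj₁vw, hrow₁v, hrow₁w, ← hx2, ← hx1]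
      ring
    have hlt2 : lam G * sumSq x < Qf ((G.replaceVertex v u).replaceVertex v w) x := by
      rw [hxx, hQ₂]
      nlinarith [hxpos w, hcpos]
    have := lam_lt_of_Qf (by rw [hxx]; norm_num) hlt2
    exact absurd (hmax _ hfree₂) (not_le.mpr this)
  -- step 4 : the classes
  set P : Fin n → Finset (Fin n) := fun v => univ.filter (fun b => ¬G.Adj v b) with hPdef
  have hPmem : ∀ v b, b ∈ P v ↔ ¬G.Adj v b := by
    intro v b; simp [hPdef]
  have hvP : ∀ v, v ∈ P v := fun v => (hPmem v v).mpr (G.loopless.irrefl v)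
  have hPeq : ∀ u v, ¬G.Adj u v → P u = P v := by
    intro u v huv
    ext b
    rw [hPmem, hPmem]
    exact ⟨fun h => htrans v u b (fun hh => huv hh.symm) h, fun h => htrans u v b huv h⟩
  have hPadj : ∀ u v, G.Adj u v ↔ P u ≠ P v := by
    intro u v
    constructor
    · intro ha heq
      have : v ∈ P u := heq ▸ hvP v
      exact (hPmem u v).mp this ha
    · intro hne
      by_contra hna
      exact hne (hPeq u v hna)
  have hxP : ∀ v b, b ∈ P v → x b = x v := by
    intro v b hb
    exact (hstep2 v b ((hPmem v b).mp hb)).symm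
  set S : ℝ := ∑ b, x b with hSdef
  have hsumP : ∀ v, ∑ b ∈ P v, x b = (#(P v) : ℝ) * x v := by
    intro v
    rw [Finset.sum_congr rfl (fun b hb => hxP v b hb), Finset.sum_const, nsmul_eq_mul]
  have hrow2 : ∀ v, rowS G x v = S - (#(P v) : ℝ) * x v := by
    intro v
    have hkey : rowS G x v + ∑ b ∈ P v, x b = S := by
      rw [rowS, hSdef, hPdef]
      rw [Finset.sum_filter]
      rw [← Finset.sum_add_distrib]
      refine Finset.sum_congr rfl fun b _ => ?_
      by_cases h : G.Adj v b
      · rw [if_pos h, if_neg (fun hh => hh h)]; ring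
      · rw [if_neg h, if_pos h]; ring
    rw [← hsumP]
    linarith
  have heig : ∀ v, (lam G + (#(P v) : ℝ)) * x v = S := by
    intro v
    have h1 := hrow v
    have h2 := hrow2 v
    rw [h1] at h2
    linarith
  -- step 5 : balance
  have hbal : ∀ u v : Fin n, #(P v) ≤ #(P u) + 1 := by
    intro u v
    by_contra hc
    push_neg at hc
    have hab : (#(P u) : ℝ) + 2 ≤ (#(P v) : ℝ) := by
      have : #(P u) + 2 ≤ #(P v) := hc
      exact_mod_cast this
    have hPne : P u ≠ P v := fun h => by rw [h] at hc; omega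
    have hadj : G.Adj u v := (hPadj u v).mpr hPne
    have hune : u ≠ v := G.ne_of_adj hadj
    have hdisj : Disjoint (P u) (P v) := by
      rw [Finset.disjoint_left]
      intro w hwu hwv
      have h1 : ¬G.Adj u w := (hPmem u w).mp hwu
      have h2 : ¬G.Adj v w := (hPmem v w).mp hwv
      exact (htrans u w v h1 (fun h => h2 h.symm)) hadj
    have hS : (#(P u) : ℝ) * x u + (#(P v) : ℝ) * x v ≤ S := by
      have h1 : ∑ b ∈ P u ∪ P v, x b ≤ S := by
        refine Finset.sum_le_sum_of_subset_of_nonneg (Finset.subset_univ _)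
          (fun i _ _ => (hxpos i).le)
      rw [Finset.sum_union hdisj, hsumP, hsumP] at h1
      exact h1
    have hb1 : (1:ℝ) ≤ (#(P u) : ℝ) := by
      have h9 : 1 ≤ #(P u) := Finset.card_pos.mpr ⟨u, hvP u⟩
      exact_mod_cast h9
    have heu := heig u
    have hev := heig v
    have hxu := hxpos u
    have hxv := hxpos v
    set a : ℝ := (#(P v) : ℝ) with ha
    set b : ℝ := (#(P u) : ℝ) with hb
    have h1 : lam G * x u ≥ a * x v := by nlinarith [heu, hS]
    have h2 : lam G * x v ≥ b * x u := by nlinarith [hev, hS]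
    have hsq : lam G * lam G ≥ a * b := by nlinarith [h1, h2, mul_pos hxu hxv]
    have hlb : b < lam G := by nlinarith [hsq, hab, hb1, hlampos]
    have hposLb : (0:ℝ) < lam G + b := by linarith
    have hE : (lam G + b) * x u = (lam G + a) * x v := heu.trans hev.symm
    have hscal : b * (lam G + a) < (a - 1) * (lam G + b) := by
      nlinarith [mul_nonneg hlampos.le (show (0:ℝ) ≤ a - b - 2 by linarith)]
    have hkey : b * x u < (a - 1) * x v := by
      have hm1 : b * x u * (lam G + b) = b * (lam G + a) * x v := by
        linear_combination b * hE
      have hm2 : b * (lam G + a) * x v < (a - 1) * (lam G + b) * x v := by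
        exact mul_lt_mul_of_pos_right hscal hxv
      have hm3 : b * x u * (lam G + b) < (a - 1) * x v * (lam G + b) := by
        rw [hm1]
        calc b * (lam G + a) * x v < (a - 1) * (lam G + b) * x v := hm2
          _ = (a - 1) * x v * (lam G + b) := by ring
      exact lt_of_mul_lt_mul_right hm3 hposLb.le
    -- move v into the class of u
    have hfree' := hfree.replaceVertex u v
    have hQ' : Qf (G.replaceVertex u v) x
        = lam G + 2 * (x v * ((a - 1) * x v - b * x u)) := by
      rw [Qf_replaceVertex hune, hQG, if_pos hadj, hrow2, hrow2]
      ring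
    have hlt2 : lam G * sumSq x < Qf (G.replaceVertex u v) x := by
      rw [hxx, hQ']
      nlinarith
    have := lam_lt_of_Qf (by rw [hxx]; norm_num) hlt2
    exact absurd (hmax _ hfree') (not_le.mpr this)
  -- step 6 : G contains an r-clique
  have hclq : ∃ C : Finset (Fin n), G.IsNClique r C := by
    by_contra hcf
    push_neg at hcf
    have hcf' : G.CliqueFree r := fun C hC => hcf C hC
    have hfree' := hcf'.sup_edge u₀ v₀
    have hQ' : Qf (G ⊔ edge u₀ v₀) x = lam G + 2 * (x u₀ * x v₀) := by
      rw [Qf_sup_edge hnadj₀ hne₀, hQG]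
    have hlt2 : lam G * sumSq x < Qf (G ⊔ edge u₀ v₀) x := by
      rw [hxx, hQ']
      nlinarith [hxpos u₀, hxpos v₀]
    have := lam_lt_of_Qf (by rw [hxx]; norm_num) hlt2
    exact absurd (hmax _ hfree') (not_le.mpr this)
  obtain ⟨C, hC⟩ := hclq
  have hrn : r < n := by
    rcases lt_or_ge r n with h | h
    · exact h
    · exfalso
      have hCcard : #C = r := hC.2
      have hCn : #C ≤ n := by
        have := Finset.card_le_univ C
        simpa using this
      have hrn' : r = n := le_antisymm (hCcard ▸ hCn) h
      have hCuniv : C = univ := by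
        apply Finset.eq_univ_of_card
        rw [hCcard, hrn']
        simp
      have hu₀C : u₀ ∈ C := hCuniv ▸ Finset.mem_univ u₀
      have hv₀C : v₀ ∈ C := hCuniv ▸ Finset.mem_univ v₀
      exact hnadj₀ (hC.1 hu₀C hv₀C hne₀)
  -- the finpartition
  let sd : Setoid (Fin n) := ⟨fun a b => ¬G.Adj a b,
    ⟨fun a => G.loopless.irrefl a, fun {a b} h => fun hh => h hh.symm, fun {a b c} h1 h2 => htrans a b c h1 h2⟩⟩
  haveI : DecidableRel sd.r := fun a b => instDecidableNot
  let fp : Finpartition (univ : Finset (Fin n)) := Finpartition.ofSetoid sd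
  have hpart : ∀ v, fp.part v = P v := by
    intro v
    ext b
    rw [hPmem]
    exact Finpartition.mem_part_ofSetoid_iff_rel
  have hparts_eq : ∀ p ∈ fp.parts, ∃ w, p = P w := by
    intro p hp
    obtain ⟨w, hw⟩ := fp.nonempty_of_mem_parts hp
    exact ⟨w, by rw [← hpart w]; exact (fp.part_eq_of_mem hp hw).symm⟩
  have hEquip : fp.IsEquipartition := by
    intro p q hp hq
    obtain ⟨wp, rfl⟩ := hparts_eq p hp
    obtain ⟨wq, rfl⟩ := hparts_eq q hq
    exact hbal wq wp
  have hcard_le : #fp.parts ≤ r := by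
    by_contra hl
    push_neg at hl
    obtain ⟨z, -, hz⟩ := fp.exists_subset_part_bijOn
    have ncf : ¬G.CliqueFree #z := by
      refine IsNClique.not_cliqueFree ⟨fun v hv w hw hne => ?_, rfl⟩
      by_contra hna
      exact hne (hz.injOn hv hw ((hpart v).trans ((hPeq v w hna).trans (hpart w).symm)))
    rw [Finset.card_eq_of_equiv hz.equiv] at ncf
    exact absurd (hfree.mono (Nat.succ_le_of_lt hl)) ncf
  have hcard_ge : r ≤ #fp.parts := by
    have hinj : Set.InjOn (fun c => fp.part c) ↑C := by
      intro c1 hc1 c2 hc2 he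
      by_contra hne
      have hadj := hC.1 hc1 hc2 hne
      have he' : fp.part c1 = fp.part c2 := he
      exact (hPadj c1 c2).mp hadj ((hpart c1).symm.trans (he'.trans (hpart c2)))
    have himg : Finset.image (fun c => fp.part c) C ⊆ fp.parts := by
      intro p hp
      rw [Finset.mem_image] at hp
      obtain ⟨c, -, rfl⟩ := hp
      exact fp.part_mem.mpr (mem_univ c)
    calc r = #C := hC.2.symm
      _ = #(Finset.image (fun c => fp.part c) C) := (Finset.card_image_of_injOn hinj).symm
      _ ≤ #fp.parts := Finset.card_le_card himg
  have hcard : #fp.parts = r := le_antisymm hcard_le hcard_ge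
  -- the isomorphism
  obtain ⟨zm, zp⟩ := hEquip.exists_partPreservingEquiv
  have hcu : #(univ : Finset (Fin n)) = n := by simp
  refine ⟨⟨(Equiv.subtypeUnivEquiv Finset.mem_univ).symm.trans (zm.trans (finCongr hcu)), ?_⟩⟩
  intro a b
  simp only [turanGraph, Equiv.trans_apply, Equiv.subtypeUnivEquiv_symm_apply, finCongr_apply,
    Fin.coe_cast]
  have hz := zp ⟨a, mem_univ a⟩ ⟨b, mem_univ b⟩
  rw [hcard] at hz
  constructor
  · intro h
    by_contra hna
    have hPe : P a = P b := hPeq a b hna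
    exact h (hz.mp ((hpart a).trans (hPe.trans (hpart b).symm)))
  · intro hadj heq
    exact (hPadj a b).mp hadj ((hpart a).symm.trans ((hz.mpr heq).trans (hpart b)))
set_option maxHeartbeats 1000000 in
/-- (Nikiforov) For every integer `r ≥ 2` and every `n ≥ 1`, if `G` is an `n`-vertex
`K_{r+1}`-free graph, then `ρ(G) ≤ ρ(T_{n,r})`, with equality iff `G ≅ T_{n,r}`. -/
theorem stmt7 (r n : ℕ) (hr : 2 ≤ r) (hn : 1 ≤ n) (G : SimpleGraph (Fin n))
    (hfree : G.CliqueFree (r + 1)) :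
    graphSpecRad G ≤ graphSpecRad (turanGraph n r) ∧
    (graphSpecRad G = graphSpecRad (turanGraph n r) ↔ Nonempty (G ≃g turanGraph n r)) := by
  classical
  haveI : Nonempty (Fin n) := ⟨⟨0, hn⟩⟩
  have hr0 : 0 < r := by omega
  set F := fun H : SimpleGraph (Fin n) => (@lam (Fin n) _ _ H (Classical.decRel H.Adj)) with hF
  have hne : (Finset.univ.filter
      (fun H : SimpleGraph (Fin n) => H.CliqueFree (r + 1))).Nonempty :=
    ⟨turanGraph n r, by simp [turanGraph_cliqueFree hr0]⟩
  obtain ⟨G₀, hG₀mem, hG₀max⟩ := Finset.exists_max_image _ F hne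
  have hG₀free : G₀.CliqueFree (r + 1) := (Finset.mem_filter.mp hG₀mem).2
  letI dG₀ : DecidableRel G₀.Adj := Classical.decRel G₀.Adj
  have hmax₀ : ∀ (H : SimpleGraph (Fin n)) [DecidableRel H.Adj],
      H.CliqueFree (r + 1) → lam H ≤ lam G₀ := by
    intro H instH hH
    have h1 := hG₀max H (Finset.mem_filter.mpr ⟨Finset.mem_univ _, hH⟩)
    calc lam H = F H := lam_congr H _ _
      _ ≤ F G₀ := h1
      _ = lam G₀ := lam_congr G₀ _ _
  obtain ⟨e₀⟩ := maximizer_iso hr G₀ hG₀free hmax₀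
  letI dG : DecidableRel G.Adj := Classical.decRel G.Adj
  letI dT : DecidableRel (turanGraph n r).Adj := Classical.decRel _
  have hradG : graphSpecRad G = lam G := graphSpecRad_eq_lam
  have hradG₀ : graphSpecRad G₀ = lam G₀ := graphSpecRad_eq_lam
  have hTmax : graphSpecRad (turanGraph n r) = lam G₀ := by
    rw [← graphSpecRad_iso e₀, hradG₀]
  have hle : graphSpecRad G ≤ graphSpecRad (turanGraph n r) := by
    rw [hradG, hTmax]
    exact hmax₀ G hfree
  refine ⟨hle, ?_, fun ⟨e⟩ => graphSpecRad_iso e⟩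
  intro heq
  have hlamG : lam G = lam G₀ := by rw [← hradG, heq, hTmax]
  have hmaxG : ∀ (H : SimpleGraph (Fin n)) [DecidableRel H.Adj],
      H.CliqueFree (r + 1) → lam H ≤ lam G := by
    intro H instH hH
    rw [hlamG]
    exact hmax₀ H hH
  exact maximizer_iso hr G hfree hmaxG
end

section
/- Let p ≥ 3, q ≥ 1 be integers and let η be a real number with 0 < η < 1/(7p⁵q). There exists n₀ such that for all n ≥ n₀ the following holds for every n-vertex B_{p,q}-free graph G with e(G) ≥ e(T_{n,p}) − ⌊n/p⌋ + 1: (i) there exists a partition V(G) = V_1 ∪ … ∪ V_p with Σ_{i=1}^p e(G[V_i]) ≤ η³n², and (ii) for every partition V(G) = V_1 ∪ … ∪ V_p with Σ_{i=1}^p e(G[V_i]) ≤ η³n², one has ||V_i| − n/p| ≤ ηn for each i ∈ {1,…,p}. -/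
open SimpleGraph

/-- `G` contains a copy of `H` as a subgraph. -/
def CopyIn {α β : Type*} (H : SimpleGraph α) (G : SimpleGraph β) : Prop :=
  ∃ f : α → β, Function.Injective f ∧ ∀ ⦃a b⦄, H.Adj a b → G.Adj (f a) (f b)

/-- The complete split graph `B_{p,q} = K_p ∇ q K_1`. -/
def completeSplitGraph (p q : ℕ) : SimpleGraph (Fin (p + q)) where
  Adj i j := i ≠ j ∧ ((i : ℕ) < p ∨ (j : ℕ) < p)
  symm := ⟨fun _ _ h => ⟨h.1.symm, h.2.symm⟩⟩
  loopless := ⟨fun _ h => h.1 rfl⟩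

/-- The number of edges of `G` with both endpoints in the part `{v | c v = i}`. -/
noncomputable def edgesWithin {n p : ℕ} (G : SimpleGraph (Fin n)) (c : Fin n → Fin p) (i : Fin p) : ℕ :=
  Set.ncard {e ∈ G.edgeSet | ∀ v ∈ e, c v = i}

/-!
Erdős' degree-majorisation proof of Turán's theorem, run inside a `B_{p,q}`-free graph: make
the non-neighbourhood of a vertex of maximum degree one part and recurse into its neighbourhood,
which is `B_{p-1,q}`-free. After `p - 1` steps the remaining set contains no `B_{1,q} = K_{1,q}`,
so its degrees are below `q`. The resulting partition satisfies
`e(G) + ∑ e(V_i) ≤ e(K) + (q - 1) n`, where `K` is the complete `p`-partite graph with parts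
`V_i`; Turán's theorem gives `e(K) ≤ e(T_{n,p}) < e(G) + ⌊n/p⌋`, hence `∑ e(V_i) ≤ q n`.

Conversely, for any partition every edge of `G` crosses or lies in a part, so
`e(G) ≤ e(K) + ∑ e(V_i)`. As `2 e(K) = n² - ∑ |V_i|²` and `2 e(T_{n,p}) ≥ n² - (⌊n/p⌋ + 1) n`,
the edge condition gives `∑ (|V_i| - n/p)² = ∑ |V_i|² - n²/p ≤ 2 ∑ e(V_i) + 3 n ≤ η² n²`.
-/

open Finset

lemma sum_sub_div_card_sq {ι K : Type*} [Field K] [CharZero K] (t : Finset ι) (s : ι → K) :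
    ∑ i ∈ t, (s i - (∑ j ∈ t, s j) / #t) ^ 2 = ∑ i ∈ t, s i ^ 2 - (∑ j ∈ t, s j) ^ 2 / #t := by
  rcases t.eq_empty_or_nonempty with rfl | ht
  · simp
  have hcard : (#t : K) ≠ 0 := by exact_mod_cast ht.card_pos.ne'
  simp_rw [sub_sq, sum_add_distrib, sum_sub_distrib, ← sum_mul, ← mul_sum, sum_const,
    nsmul_eq_mul]
  field_simp
  ring

lemma abs_le_of_sum_sq_le {ι R : Type*} [Ring R] [LinearOrder R] [IsStrictOrderedRing R]
    {t : Finset ι} {f : ι → R} {r : R} (hr : 0 ≤ r)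
    (h : ∑ j ∈ t, f j ^ 2 ≤ r ^ 2) {i : ι} (hi : i ∈ t) : |f i| ≤ r :=
  abs_le_of_sq_le_sq ((single_le_sum (fun j _ => sq_nonneg (f j)) hi).trans h) hr

section CopyWithin

variable {α β : Type*}

def CopyWithin (H : SimpleGraph α) (G : SimpleGraph β) (S : Set β) : Prop :=
  ∃ f : α → β, Function.Injective f ∧ (∀ a, f a ∈ S) ∧ ∀ ⦃a b⦄, H.Adj a b → G.Adj (f a) (f b)

lemma CopyWithin.copyIn {H : SimpleGraph α} {G : SimpleGraph β} {S : Set β}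
    (h : CopyWithin H G S) : CopyIn H G :=
  let ⟨f, hf, _, hadj⟩ := h
  ⟨f, hf, hadj⟩

end CopyWithin

section SplitGraph

variable {V : Type*} {G : SimpleGraph V} {k q : ℕ}

lemma copyWithin_completeSplitGraph_zero {T : Finset V} (h : q ≤ #T) :
    CopyWithin (completeSplitGraph 0 q) G T := by
  refine ⟨fun a => (T.equivFin.symm (Fin.castLE h (Fin.cast (Nat.zero_add q) a)) : V),
    ?_, fun a => Subtype.property _, ?_⟩
  · exact Subtype.val_injective.comp <| T.equivFin.symm.injective.comp <|
      (Fin.castLE_injective h).comp (Fin.cast_injective _)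
  · rintro a b ⟨-, ha | hb⟩ <;> omega

lemma CopyWithin.completeSplitGraph_succ [DecidableRel G.Adj] {S : Finset V} {x : V} (hx : x ∈ S)
    (h : CopyWithin (completeSplitGraph k q) G ↑{v ∈ S | G.Adj x v}) :
    CopyWithin (completeSplitGraph (k + 1) q) G S := by
  obtain ⟨f, hf, hf_mem, hadj⟩ := h
  have hfS a : f a ∈ S ∧ G.Adj x (f a) := mem_filter.1 (hf_mem a)
  have hlen : k + 1 + q = k + q + 1 := by omega
  -- `x` becomes vertex `0` of the clique and vertex `j` of the old copy becomes vertex `j + 1`.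
  refine ⟨fun a => (Fin.cons x f : Fin (k + q + 1) → V) (Fin.cast hlen a), ?_, ?_, ?_⟩
  · refine (Fin.cons_injective_iff.2 ⟨?_, hf⟩).comp (Fin.cast_injective hlen)
    rintro ⟨a, ha⟩
    exact G.irrefl (ha ▸ (hfS a).2)
  · intro a
    rcases Fin.eq_zero_or_eq_succ (Fin.cast hlen a) with h | ⟨j, h⟩ <;>
      simp only [h, Fin.cons_zero, Fin.cons_succ]
    exacts [hx, (hfS j).1]
  · intro a b hab
    have hval : ∀ a : Fin (k + 1 + q), ((Fin.cast hlen a : Fin (k + q + 1)) : ℕ) = a := fun _ => rfl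
    obtain ⟨hne, hlt⟩ := hab
    rcases Fin.eq_zero_or_eq_succ (Fin.cast hlen a) with ha | ⟨i, ha⟩ <;>
      rcases Fin.eq_zero_or_eq_succ (Fin.cast hlen b) with hb | ⟨j, hb⟩ <;>
      simp only [ha, hb, Fin.cons_zero, Fin.cons_succ]
    · exact absurd ((Fin.cast_injective hlen) (ha.trans hb.symm)) hne
    · exact (hfS j).2
    · exact ((hfS i).2).symm
    · have hai := congrArg Fin.val ha; have hbj := congrArg Fin.val hb
      simp only [hval, Fin.val_succ] at hai hbj
      refine hadj ⟨fun hij => hne (Fin.ext (by rw [hai, hbj, hij])), by omega⟩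

end SplitGraph

namespace SimpleGraph

section DegreesWithin

variable {V : Type*} (G : SimpleGraph V) [DecidableRel G.Adj]

def degIn (S : Finset V) (u : V) : ℕ := #{v ∈ S | G.Adj u v}

def degSumIn (S : Finset V) : ℕ := ∑ u ∈ S, G.degIn S u

lemma degree_induce_eq_degIn (S : Finset V) (u : (S : Set V)) :
    (G.induce (S : Set V)).degree u = G.degIn S u := by
  rw [← card_neighborFinset_eq_degree, degIn]
  refine card_nbij (fun v => v.1) (fun v hv => ?_) (fun v _ w _ h => Subtype.ext h) fun v hv => ?_
  · simpa using hv
  · simp only [coe_filter, Set.mem_ofPred_eq] at hv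
    simpa [And.comm] using hv

lemma sum_degIn_comm (A B : Finset V) : ∑ u ∈ A, G.degIn B u = ∑ u ∈ B, G.degIn A u := by
  simp_rw [degIn, card_filter]
  rw [sum_comm]
  simp_rw [G.adj_comm]

lemma two_mul_card_edgeFinset_inter_sym2 [Fintype V] [DecidableEq V] (S : Finset V) :
    2 * #(G.edgeFinset ∩ S.sym2) = G.degSumIn S := by
  have hcard := congrArg card (G.map_edgeFinset_induce (s := (S : Set V)))
  rw [card_map] at hcard
  calc 2 * #(G.edgeFinset ∩ S.sym2)
      = 2 * #(G.induce (S : Set V)).edgeFinset := by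
        convert (congrArg (2 * ·) hcard).symm using 3
        · simp
        · congr!
    _ = ∑ u : (S : Set V), G.degIn S u := by
        rw [← sum_degrees_eq_twice_card_edges]; simp_rw [degree_induce_eq_degIn]
    _ = G.degSumIn S := sum_coe_sort S _

variable {G}

lemma degIn_lt_of_not_copyWithin {q : ℕ} {S : Finset V}
    (h : ¬ CopyWithin (completeSplitGraph 1 q) G S) {x : V} (hx : x ∈ S) : G.degIn S x < q := by
  by_contra! hq
  exact h ((copyWithin_completeSplitGraph_zero hq).completeSplitGraph_succ hx)

lemma degSumIn_le_of_not_copyWithin {q : ℕ} {S : Finset V}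
    (h : ¬ CopyWithin (completeSplitGraph 1 q) G S) : G.degSumIn S ≤ (q - 1) * #S := by
  rw [mul_comm, ← smul_eq_mul, ← sum_const]
  exact sum_le_sum fun x hx => Nat.le_sub_one_of_lt (degIn_lt_of_not_copyWithin (G := G) h hx)

variable [DecidableEq V]

lemma degIn_union {A B : Finset V} (h : Disjoint A B) (u : V) :
    G.degIn (A ∪ B) u = G.degIn A u + G.degIn B u := by
  rw [degIn, filter_union, card_union_of_disjoint (disjoint_filter_filter h), degIn, degIn]

lemma degSumIn_union {A B : Finset V} (h : Disjoint A B) :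
    G.degSumIn (A ∪ B) = G.degSumIn A + 2 * ∑ u ∈ A, G.degIn B u + G.degSumIn B := by
  rw [degSumIn, sum_union h]
  simp_rw [degIn_union h, sum_add_distrib]
  rw [sum_degIn_comm G B A, degSumIn, degSumIn]
  ring

/-- The degree-majorisation step of Erdős' proof of Turán's theorem: the right-hand side is the
degree sum of `S` after making `S \ B` independent and joining it completely to `B`. -/
lemma degSumIn_add_degSumIn_sdiff_le {S B : Finset V} (hBS : B ⊆ S)
    (hdeg : ∀ u ∈ S \ B, G.degIn S u ≤ #B) :
    G.degSumIn S + G.degSumIn (S \ B) ≤ 2 * (#(S \ B) * #B) + G.degSumIn B := by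
  have hdisj : Disjoint (S \ B) B := sdiff_disjoint
  have hsum : G.degSumIn (S \ B) + ∑ u ∈ S \ B, G.degIn B u ≤ #(S \ B) * #B := by
    rw [degSumIn, ← sum_add_distrib, card_eq_sum_ones, sum_mul, one_mul]
    refine sum_le_sum fun u hu => ?_
    rw [← degIn_union hdisj, sdiff_union_of_subset hBS]
    exact hdeg u hu
  have hS := G.degSumIn_union hdisj
  rw [sdiff_union_of_subset hBS] at hS
  omega

end DegreesWithin

section Coloring

variable {V : Type*} [DecidableEq V] {G : SimpleGraph V} [DecidableRel G.Adj]

lemma sum_parts_ite_succ {M : Type*} [AddCommMonoid M] (F : Finset V → M) {k : ℕ}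
    {S B : Finset V} (hBS : B ⊆ S) (cB : V → Fin k) :
    ∑ i, F {v ∈ S | (if v ∈ B then (cB v).succ else 0) = i} =
      F (S \ B) + ∑ i, F {v ∈ B | cB v = i} := by
  rw [Fin.sum_univ_succ]
  congr 1
  · congr 1; ext v; by_cases hv : v ∈ B <;> simp [hv, Fin.succ_ne_zero]
  · refine sum_congr rfl fun i _ => congrArg F ?_
    ext v; by_cases hv : v ∈ B
    · simp [hv, hBS hv]
    · simp [hv, (Fin.succ_ne_zero _).symm]

/-- `#S ^ 2 - ∑ i, #S_i ^ 2` is the degree sum of the complete `k`-partite graph on the parts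
`S_i = {v ∈ S | c v = i}`. -/
theorem exists_coloring_degSumIn_le (q : ℕ) {k : ℕ} (hk : 0 < k) (S : Finset V)
    (hS : ¬ CopyWithin (completeSplitGraph k q) G S) :
    ∃ c : V → Fin k, G.degSumIn S + ∑ i, G.degSumIn {v ∈ S | c v = i} +
      ∑ i, #{v ∈ S | c v = i} ^ 2 ≤ #S ^ 2 + 2 * (q - 1) * #S := by
  induction k, hk using Nat.le_induction generalizing S with
  | base =>
    refine ⟨0, ?_⟩
    have hpart : ({v ∈ S | (0 : V → Fin 1) v = 0} : Finset V) = S :=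
      filter_true_of_mem fun _ _ => rfl
    simp only [Fin.sum_univ_one, hpart]
    linarith [degSumIn_le_of_not_copyWithin hS]
  | succ k hk ih =>
    rcases S.eq_empty_or_nonempty with rfl | hSne
    · exact ⟨0, by simp [degSumIn]⟩
    obtain ⟨x, hxS, hxmax⟩ := S.exists_max_image (G.degIn S) hSne
    set B : Finset V := {v ∈ S | G.Adj x v}
    have hBS : B ⊆ S := filter_subset _ _
    obtain ⟨cB, hcB⟩ := ih B fun hB => hS (hB.completeSplitGraph_succ hxS)
    have hstep := G.degSumIn_add_degSumIn_sdiff_le hBS fun u hu => hxmax u (sdiff_subset hu)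
    have hcard := card_sdiff_add_card_eq_card hBS
    refine ⟨fun v => if v ∈ B then (cB v).succ else 0, ?_⟩
    rw [sum_parts_ite_succ _ hBS, sum_parts_ite_succ (#· ^ 2) hBS, ← hcard]
    nlinarith

end Coloring

section Multipartite

variable {V ι : Type*} [Fintype V] [Fintype ι] [DecidableEq ι]

/-- `(⊤ : SimpleGraph ι).comap c` is the complete multipartite graph whose parts are the fibres
of `c`. -/
lemma two_mul_card_edgeFinset_comap_top_add_sum_sq (c : V → ι) :
    2 * #((⊤ : SimpleGraph ι).comap c).edgeFinset + ∑ i, #{v | c v = i} ^ 2 =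
      Fintype.card V ^ 2 := by
  have hdeg v : ((⊤ : SimpleGraph ι).comap c).degree v + #{w | c w = c v} = Fintype.card V := by
    have := card_filter_add_card_filter_not (s := univ) (fun w => c w = c v)
    rw [← card_neighborFinset_eq_degree, neighborFinset_eq_filter]
    simpa [add_comm, eq_comm] using this
  have hsq : ∑ i, #{v | c v = i} ^ 2 = ∑ v, #{w | c w = c v} := by
    rw [← sum_fiberwise univ c fun v => #{w | c w = c v}]
    refine sum_congr rfl fun i _ => ?_
    rw [sum_congr rfl fun v hv => by rw [(mem_filter.1 hv).2], sum_const, smul_eq_mul, sq]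
  rw [← sum_degrees_eq_twice_card_edges, hsq, ← sum_add_distrib, sum_congr rfl fun v _ => hdeg v,
    sum_const, card_univ, smul_eq_mul, sq]

lemma card_edgeFinset_le_comap_top_add [DecidableEq V] (G : SimpleGraph V) [DecidableRel G.Adj]
    (c : V → ι) :
    #G.edgeFinset ≤ #((⊤ : SimpleGraph ι).comap c).edgeFinset +
      ∑ i, #(G.edgeFinset ∩ ({v | c v = i} : Finset V).sym2) := by
  refine (card_le_card fun e he => ?_).trans ((card_union_le _ _).trans
    (add_le_add le_rfl card_biUnion_le))
  induction e using Sym2.ind with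
  | _ u v =>
  by_cases huv : c u = c v
  · refine mem_union_right _ (mem_biUnion.2 ⟨c u, mem_univ _, mem_inter.2 ⟨he, ?_⟩⟩)
    simp [Finset.mem_sym2_iff, huv]
  · exact mem_union_left _ (by simpa using huv)

end Multipartite

section Turan

variable {n p : ℕ}

lemma card_edgeFinset_comap_top_le_turanGraph (hp : 0 < p) (c : Fin n → Fin p) :
    #((⊤ : SimpleGraph (Fin p)).comap c).edgeFinset ≤ #(turanGraph n p).edgeFinset :=
  (isTuranMaximal_turanGraph hp).2 <|
    Colorable.cliqueFree ⟨Coloring.mk c fun h => h⟩ (Nat.lt_add_one p)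

lemma card_filter_mod_eq_le (i : ℕ) : #{v : Fin n | (v : ℕ) % p = i} ≤ n / p + 1 := by
  refine (card_le_card_of_injOn (fun v : Fin n => (v : ℕ) / p) (t := range (n / p + 1))
    (fun v _ => mem_range.2 (Nat.lt_succ_of_le (Nat.div_le_div_right v.isLt.le))) ?_).trans_eq
    (card_range _)
  intro u hu v hv huv
  simp only [coe_filter, mem_univ, true_and, Set.mem_ofPred_eq] at hu hv
  rw [Fin.ext_iff, ← Nat.div_add_mod u p, ← Nat.div_add_mod v p, hu, hv]
  exact congrArg (p * · + i) huv

lemma sq_le_two_mul_card_edgeFinset_turanGraph_add (hp : 0 < p) :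
    n ^ 2 ≤ 2 * #(turanGraph n p).edgeFinset + (n / p + 1) * n := by
  let c : Fin n → Fin p := fun v => ⟨v % p, Nat.mod_lt _ hp⟩
  have hT : #(turanGraph n p).edgeFinset = #((⊤ : SimpleGraph (Fin p)).comap c).edgeFinset := by
    congr! 2
    ext v w
    simp [turanGraph_adj, c, Fin.ext_iff]
  have hparts : ∑ i, #{v | c v = i} ^ 2 ≤ (n / p + 1) * n := by
    calc ∑ i, #{v | c v = i} ^ 2 ≤ ∑ i, (n / p + 1) * #{v | c v = i} := by
          refine sum_le_sum fun i _ => ?_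
          rw [sq]
          refine Nat.mul_le_mul_right _ ((card_le_card fun v => ?_).trans (card_filter_mod_eq_le i))
          simp [c, Fin.ext_iff]
      _ = (n / p + 1) * n := by
          rw [← mul_sum, ← card_eq_sum_card_fiberwise fun v _ => mem_univ (c v), card_univ,
            Fintype.card_fin]
  have hid := two_mul_card_edgeFinset_comap_top_add_sum_sq c
  rw [Fintype.card_fin] at hid
  omega

end Turan

section EdgesWithin

lemma ncard_edgeSet {V : Type*} [Fintype V] (G : SimpleGraph V) [DecidableRel G.Adj] :
    G.edgeSet.ncard = #G.edgeFinset :=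
  Set.ncard_eq_toFinset_card' _

variable {n p : ℕ} (G : SimpleGraph (Fin n))

lemma edgesWithin_eq_card [DecidableRel G.Adj] (c : Fin n → Fin p) (i : Fin p) :
    edgesWithin G c i = #(G.edgeFinset ∩ ({v | c v = i} : Finset (Fin n)).sym2) := by
  rw [edgesWithin, Set.ncard_eq_toFinset_card']
  congr 1
  ext e
  simp only [Set.mem_toFinset, Set.mem_ofPred_eq, mem_inter, mem_edgeFinset, Finset.mem_sym2_iff,
    mem_filter, mem_univ, true_and]

lemma two_mul_edgesWithin [DecidableRel G.Adj] (c : Fin n → Fin p) (i : Fin p) :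
    2 * edgesWithin G c i = G.degSumIn {v | c v = i} := by
  rw [edgesWithin_eq_card, two_mul_card_edgeFinset_inter_sym2]

variable {G} [DecidableRel G.Adj]

theorem exists_coloring_sum_edgesWithin_le {q : ℕ} (hp : 0 < p) (hq : 1 ≤ q)
    (hG : ¬ CopyIn (completeSplitGraph p q) G)
    (hedge : (turanGraph n p).edgeSet.ncard + 1 ≤ G.edgeSet.ncard + n / p) :
    ∃ c : Fin n → Fin p, ∑ i, edgesWithin G c i ≤ q * n := by
  obtain ⟨c, hc⟩ := exists_coloring_degSumIn_le q hp univ fun h => hG h.copyIn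
  refine ⟨c, ?_⟩
  have hG2 : G.degSumIn univ = 2 * #G.edgeFinset := by
    rw [← two_mul_card_edgeFinset_inter_sym2]; simp
  have hparts : ∑ i, G.degSumIn {v | c v = i} = 2 * ∑ i, edgesWithin G c i := by
    simp_rw [mul_sum, two_mul_edgesWithin]
  have hid := two_mul_card_edgeFinset_comap_top_add_sum_sq c
  have hT := card_edgeFinset_comap_top_le_turanGraph hp c
  have hnp : n / p ≤ n := Nat.div_le_self n p
  have hq' : (q - 1) * n + n = q * n := by
    rw [← Nat.succ_mul, Nat.succ_eq_add_one, Nat.sub_add_cancel hq]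
  rw [ncard_edgeSet, ncard_edgeSet] at hedge
  simp only [card_univ, Fintype.card_fin] at hc hid
  linarith

theorem sum_sq_card_add_two_le (hp : 0 < p)
    (hedge : (turanGraph n p).edgeSet.ncard + 1 ≤ G.edgeSet.ncard + n / p) (c : Fin n → Fin p) :
    ∑ i, #{v | c v = i} ^ 2 + 2 ≤ 2 * ∑ i, edgesWithin G c i + 2 * (n / p) + (n / p + 1) * n := by
  have hsplit := card_edgeFinset_le_comap_top_add G c
  simp_rw [← edgesWithin_eq_card] at hsplit
  have hid := two_mul_card_edgeFinset_comap_top_add_sum_sq c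
  have hT := sq_le_two_mul_card_edgeFinset_turanGraph_add (n := n) hp
  rw [ncard_edgeSet, ncard_edgeSet] at hedge
  rw [Fintype.card_fin] at hid
  linarith

theorem sum_sq_card_sub_div_le (hp : 0 < p)
    (hedge : (turanGraph n p).edgeSet.ncard + 1 ≤ G.edgeSet.ncard + n / p) (c : Fin n → Fin p) :
    ∑ i, ((#{v | c v = i} : ℕ) - (n : ℝ) / p) ^ 2 ≤ 2 * ∑ i, (edgesWithin G c i : ℝ) + 3 * n := by
  have hsum : ∑ i, ((#{v | c v = i} : ℕ) : ℝ) = n := by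
    exact_mod_cast (card_eq_sum_card_fiberwise fun v _ => mem_univ (c v)).symm.trans (card_fin n)
  have hbound : ∑ i, ((#{v | c v = i} : ℕ) : ℝ) ^ 2 + 2 ≤
      2 * ∑ i, (edgesWithin G c i : ℝ) + 2 * ((n / p : ℕ) : ℝ) + ((n / p : ℕ) + 1) * n := by
    exact_mod_cast sum_sq_card_add_two_le hp hedge c
  set s : Fin p → ℝ := fun i => (#{v | c v = i} : ℕ)
  have hfloor : ((n / p : ℕ) : ℝ) ≤ n / p := Nat.cast_div_le
  have hnp : (n : ℝ) / p ≤ n := div_le_self (Nat.cast_nonneg n) (by exact_mod_cast hp)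
  have hvar := sum_sub_div_card_sq univ s
  rw [hsum, card_univ, Fintype.card_fin] at hvar
  rw [hvar, show (n : ℝ) ^ 2 / p = n / p * n by ring]
  have := mul_le_mul_of_nonneg_right hfloor (Nat.cast_nonneg (α := ℝ) n)
  linarith

end EdgesWithin

end SimpleGraph

/-- Lemma 2.3: for `p ≥ 3`, `q ≥ 1`, `0 < η < 1/(7p⁵q)` and `n` large, every `n`-vertex
`B_{p,q}`-free graph `G` with `e(G) ≥ e(T_{n,p}) - ⌊n/p⌋ + 1` admits a partition
`V(G) = V_1 ∪ ⋯ ∪ V_p` with `∑ e(G[V_i]) ≤ η³n²`, and every such partition satisfies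
`||V_i| - n/p| ≤ ηn` for each `i`. -/
theorem stmt11 (p q : ℕ) (hp : 3 ≤ p) (hq : 1 ≤ q) (η : ℝ) (hη0 : 0 < η)
    (hη : η < 1 / (7 * (p : ℝ) ^ 5 * q)) :
    ∃ n₀ : ℕ, ∀ n ≥ n₀, ∀ G : SimpleGraph (Fin n),
      ¬ CopyIn (completeSplitGraph p q) G →
      (turanGraph n p).edgeSet.ncard + 1 ≤ G.edgeSet.ncard + n / p →
      (∃ c : Fin n → Fin p, (∑ i, (edgesWithin G c i : ℝ)) ≤ η ^ 3 * n ^ 2) ∧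
      (∀ c : Fin n → Fin p, (∑ i, (edgesWithin G c i : ℝ)) ≤ η ^ 3 * n ^ 2 →
        ∀ i : Fin p, |({v | c v = i}.ncard : ℝ) - (n : ℝ) / p| ≤ η * n) := by
  have hp0 : 0 < p := by omega
  have hη_half : η < 1 / 2 := by
    refine hη.trans_le (one_div_le_one_div_of_le two_pos ?_)
    have : (1 : ℝ) ≤ (p : ℝ) ^ 5 * q := one_le_mul_of_one_le_of_one_le
      (one_le_pow₀ (by exact_mod_cast hp0)) (by exact_mod_cast hq)
    linarith
  have hη3 : 0 < η ^ 3 := by positivity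
  have hgap : 0 < η ^ 2 * (1 - 2 * η) := mul_pos (by positivity) (by linarith)
  obtain ⟨n₀, hn₀⟩ := Filter.eventually_atTop.1 <|
    ((tendsto_natCast_atTop_atTop.const_mul_atTop hη3).eventually_ge_atTop (q : ℝ)).and
      ((tendsto_natCast_atTop_atTop.const_mul_atTop hgap).eventually_ge_atTop 3)
  refine ⟨n₀, fun n hn G hG hedge => ?_⟩
  classical
  obtain ⟨hqn, h3n⟩ := hn₀ n hn
  refine ⟨?_, fun c hc i => ?_⟩
  · obtain ⟨c, hc⟩ := exists_coloring_sum_edgesWithin_le hp0 hq hG hedge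
    refine ⟨c, ?_⟩
    calc ∑ i, (edgesWithin G c i : ℝ) ≤ q * n := by exact_mod_cast hc
      _ ≤ η ^ 3 * n * n := by gcongr
      _ = η ^ 3 * n ^ 2 := by ring
  · have hsq := sum_sq_card_sub_div_le hp0 hedge c
    rw [Set.ncard_eq_toFinset_card', Set.toFinset_ofPred]
    refine abs_le_of_sum_sq_le (f := fun j => ((#{v | c v = j} : ℕ) : ℝ) - n / p) (by positivity) ?_
      (mem_univ i)
    calc _ ≤ 2 * ∑ i, (edgesWithin G c i : ℝ) + 3 * n := hsq
      _ ≤ 2 * (η ^ 3 * n ^ 2) + η ^ 2 * (1 - 2 * η) * n * n := by gcongr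
      _ = (η * n) ^ 2 := by ring
end

section
/- Let p ≥ 3, q ≥ 1 be integers and let η be a real number with 0 < η < 1/(7p⁵q). There exists n₀ such that for all n ≥ n₀: if G is an n-vertex B_{p,q}-free graph with e(G) ≥ e(T_{n,p}) − ⌊n/p⌋ + 1, then the set S = {v ∈ V(G) : d_G(v) ≤ ((p−1)/p − 5η)·n} satisfies |S| ≤ ηn. -/
/-!
Suppose more than `ηn` vertices have degree at most `((p-1)/p - 5η)n` and delete `⌈ηn⌉` of them.
As `e(G) ≥ (1 - 1/p)n²/2 - n`, what remains is so dense that repeatedly discarding a vertex of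
relative degree below `c = 1 - 1/p + 2η²` must stop at a set `B` of more than `η²n` vertices in
which every vertex has at least `c|B|` neighbours. Inside `B` pick a `p`-clique greedily: each new
vertex shrinks the common neighbourhood by at most `(1 - c)|B|`, so `2pη²|B| ≥ q` common
neighbours survive, and together with the clique they span a copy of `B_{p,q}`.
-/

open SimpleGraph Finset

lemma copyIn_completeSplitGraph_of_isNClique {V : Type*} {G : SimpleGraph V} {p q : ℕ}
    {C Q : Finset V} (hC : G.IsNClique p C) (hQ : #Q = q) (hCQ : ∀ u ∈ C, ∀ w ∈ Q, G.Adj u w) :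
    CopyIn (completeSplitGraph p q) G := by
  set x : Fin p → V := fun i => (C.equivFinOfCardEq hC.card_eq).symm i
  set y : Fin q → V := fun j => (Q.equivFinOfCardEq hQ).symm j
  have hx : ∀ i, x i ∈ C := fun i => Subtype.prop _
  have hy : ∀ j, y j ∈ Q := fun j => Subtype.prop _
  have hxinj : Function.Injective x := Subtype.val_injective.comp (Equiv.injective _)
  refine ⟨Fin.append x y, Fin.append_injective_iff.2 ⟨hxinj,
    Subtype.val_injective.comp (Equiv.injective _),
    fun i j h => G.irrefl (hCQ _ (hx i) _ (h ▸ hy j))⟩, ?_⟩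
  intro a b hab
  induction a using Fin.addCases <;> induction b using Fin.addCases <;>
    simp only [completeSplitGraph, ne_eq, Fin.val_castAdd, Fin.val_natAdd] at hab <;>
    simp only [Fin.append_left, Fin.append_right]
  · exact hC.isClique (hx _) (hx _) (hxinj.ne fun h => hab.1 (by rw [h]))
  · exact hCQ _ (hx _) _ (hy _)
  · exact (hCQ _ (hx _) _ (hy _)).symm
  · omega

namespace SimpleGraph

variable {V : Type*} (G : SimpleGraph V) [DecidableRel G.Adj]

/-- Twice the number of edges of `G` inside `A`. -/
def internalDegreeSum (A : Finset V) : ℕ := ∑ v ∈ A, #{w ∈ A | G.Adj v w}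

lemma internalDegreeSum_add_card_le (A : Finset V) : G.internalDegreeSum A + #A ≤ #A * #A :=
  calc G.internalDegreeSum A + #A = ∑ v ∈ A, (#{w ∈ A | G.Adj v w} + 1) := by
        rw [internalDegreeSum, sum_add_distrib, card_eq_sum_ones A]
    _ ≤ ∑ _v ∈ A, #A := sum_le_sum fun v hv => card_lt_card (filter_ssubset.2 ⟨v, hv, G.irrefl⟩)
    _ = #A * #A := by rw [sum_const, smul_eq_mul]

lemma internalDegreeSum_eq_erase_add [DecidableEq V] {A : Finset V} {v : V} (hv : v ∈ A) :
    G.internalDegreeSum A = G.internalDegreeSum (A.erase v) + 2 * #{w ∈ A | G.Adj v w} := by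
  set f : V → V → ℕ := fun u w => if G.Adj u w then 1 else 0
  have hsymm : ∑ u ∈ A, f u v = #{w ∈ A | G.Adj v w} := by
    simp_rw [f, card_filter, G.adj_comm]
  have hloop : ∑ w ∈ A.erase v, f v w = #{w ∈ A | G.Adj v w} := by
    rw [card_filter, sum_erase _ (by simp [f])]
  calc G.internalDegreeSum A = ∑ u ∈ A, ∑ w ∈ A, f u w := by
        simp only [internalDegreeSum, card_filter, f]
    _ = ∑ u ∈ A, (f u v + ∑ w ∈ A.erase v, f u w) :=
        sum_congr rfl fun u _ => (add_sum_erase A (f u) hv).symm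
    _ = ∑ u ∈ A, f u v +
          (∑ w ∈ A.erase v, f v w + ∑ u ∈ A.erase v, ∑ w ∈ A.erase v, f u w) := by
        rw [sum_add_distrib, add_sum_erase A (fun u => ∑ w ∈ A.erase v, f u w) hv]
    _ = _ := by
        rw [hsymm, hloop]
        simp only [internalDegreeSum, card_filter, f]
        ring

lemma internalDegreeSum_le_sdiff_add [Fintype V] [DecidableEq V] (A B : Finset V) :
    G.internalDegreeSum A ≤ G.internalDegreeSum (A \ B) + 2 * ∑ v ∈ B, G.degree v := by
  induction B using Finset.induction_on with
  | empty => simp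
  | @insert v B hv ih =>
    rw [sum_insert hv, sdiff_insert]
    have hdeg : #{w ∈ A \ B | G.Adj v w} ≤ G.degree v := by
      rw [← card_neighborFinset_eq_degree, neighborFinset_eq_filter]
      exact card_le_card (filter_subset_filter _ (subset_univ _))
    by_cases hvA : v ∈ A \ B
    · rw [G.internalDegreeSum_eq_erase_add hvA] at ih
      omega
    · rw [erase_eq_of_notMem hvA]
      omega

lemma internalDegreeSum_univ [Fintype V] : G.internalDegreeSum univ = 2 * #G.edgeFinset := by
  rw [← sum_degrees_eq_twice_card_edges]
  exact sum_congr rfl fun v _ => by rw [← card_neighborFinset_eq_degree, neighborFinset_eq_filter]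

/-- The hypothesis survives the deletion of a vertex of degree `< c|A|` in `A`; once no such vertex
is left, `internalDegreeSum A + |A| ≤ |A|²` forces `|A| > t`. -/
lemma exists_subset_forall_mul_card_le_of_le_internalDegreeSum [DecidableEq V]
    {c t : ℝ} (hc : c < 1) (ht : 0 < t) (A : Finset V)
    (hA : c * #A ^ 2 + (1 - c) * t ^ 2 + #A ≤ G.internalDegreeSum A) :
    ∃ B ⊆ A, t < #B ∧ ∀ v ∈ B, c * #B ≤ #{w ∈ B | G.Adj v w} := by
  induction A using Finset.strongInduction with
  | _ A ih =>
  by_cases hmin : ∃ v ∈ A, #{w ∈ A | G.Adj v w} < c * #A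
  · obtain ⟨v, hvA, hv⟩ := hmin
    have hcard : (#(A.erase v) : ℝ) = #A - 1 := by
      rw [card_erase_of_mem hvA, Nat.cast_pred (card_pos.2 ⟨v, hvA⟩)]
    have hW : (G.internalDegreeSum A : ℝ) =
        G.internalDegreeSum (A.erase v) + 2 * #{w ∈ A | G.Adj v w} := by
      exact_mod_cast G.internalDegreeSum_eq_erase_add hvA
    obtain ⟨B, hBA, hB⟩ := ih (A.erase v) (erase_ssubset hvA) (by rw [hcard]; nlinarith)
    exact ⟨B, hBA.trans (erase_subset v A), hB⟩
  · refine ⟨A, subset_rfl, ?_, by simpa using hmin⟩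
    have hW : (G.internalDegreeSum A + #A : ℝ) ≤ #A * #A := by
      exact_mod_cast G.internalDegreeSum_add_card_le A
    by_contra! hAt
    rcases (#A).eq_zero_or_pos with h0 | hpos
    · rw [h0, Nat.cast_zero] at hA hW
      nlinarith [mul_pos (sub_pos.2 hc) (pow_pos ht 2)]
    · have : (1 : ℝ) ≤ #A := by exact_mod_cast hpos
      nlinarith [mul_nonneg (mul_nonneg (sub_pos.2 hc).le (sub_nonneg.2 hAt))
        (by linarith : (0 : ℝ) ≤ t + #A)]

lemma exists_isNClique_of_forall_mul_card_le [DecidableEq V] {B : Finset V} {c : ℝ}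
    (hc : c ≤ 1) (hB : ∀ v ∈ B, c * #B ≤ #{w ∈ B | G.Adj v w}) (j : ℕ)
    (hj : j * (1 - c) * #B < #B) :
    ∃ C, ∃ D ⊆ B, G.IsNClique j C ∧ (∀ u ∈ C, ∀ w ∈ D, G.Adj u w) ∧
      (1 - j * (1 - c)) * #B ≤ #D := by
  induction j with
  | zero => exact ⟨∅, B, subset_rfl, by simp, by simp, by simp⟩
  | succ j ih =>
    push_cast at hj
    have hslack : 0 ≤ (1 - c) * #B := mul_nonneg (sub_nonneg.2 hc) (Nat.cast_nonneg _)
    obtain ⟨C, D, hDB, hC, hCD, hD⟩ := ih (by nlinarith)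
    obtain ⟨v, hv⟩ : D.Nonempty := card_pos.1 (by exact_mod_cast (by nlinarith : (0:ℝ) < #D))
    refine ⟨insert v C, {w ∈ D | G.Adj v w}, (filter_subset _ _).trans hDB,
      hC.insert fun u hu => (hCD u hu v hv).symm, ?_, ?_⟩
    · intro u hu w hw
      rw [mem_filter] at hw
      rcases mem_insert.1 hu with rfl | hu
      exacts [hw.2, hCD u hu w hw.1]
    · have hsplitD := card_filter_add_card_filter_not (s := D) (fun w => G.Adj v w)
      have hsplitB := card_filter_add_card_filter_not (s := B) (fun w => G.Adj v w)
      have hnonadj : #{w ∈ D | ¬G.Adj v w} ≤ #{w ∈ B | ¬G.Adj v w} :=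
        card_le_card (filter_subset_filter _ hDB)
      have hcount : (#D + #{w ∈ B | G.Adj v w} : ℝ) ≤ #{w ∈ D | G.Adj v w} + #B := by
        exact_mod_cast (by omega)
      push_cast
      nlinarith [hB v (hDB hv)]

lemma copyIn_completeSplitGraph_of_forall_mul_card_le [DecidableEq V] {B : Finset V} {c : ℝ}
    {p q : ℕ} (hc : c ≤ 1) (hB : ∀ v ∈ B, c * #B ≤ #{w ∈ B | G.Adj v w}) (hq : 0 < q)
    (hqB : q ≤ (1 - p * (1 - c)) * #B) :
    CopyIn (completeSplitGraph p q) G := by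
  have hq' : (0 : ℝ) < q := by exact_mod_cast hq
  obtain ⟨C, D, -, hC, hCD, hD⟩ := G.exists_isNClique_of_forall_mul_card_le hc hB p (by linarith)
  obtain ⟨Q, hQD, hQ⟩ := exists_subset_card_eq (show q ≤ #D by exact_mod_cast hqB.trans hD)
  exact copyIn_completeSplitGraph_of_isNClique hC hQ fun u hu w hw => hCD u hu w (hQD hw)

lemma exists_dense_subset_of_many_small_degrees [Fintype V] [DecidableEq V] {a η : ℝ}
    (ha : 0 ≤ a) (hc : a + 2 * η ^ 2 < 1) (hη0 : 0 < η) (hη1 : η ≤ 1)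
    (hn : 3 ≤ η ^ 2 * Fintype.card V)
    (he : a * Fintype.card V ^ 2 - 2 * Fintype.card V ≤ 2 * #G.edgeFinset)
    {S : Finset V} (hS : η * Fintype.card V ≤ #S)
    (hdeg : ∀ v ∈ S, G.degree v ≤ (a - 5 * η) * Fintype.card V) :
    ∃ B : Finset V, η ^ 2 * Fintype.card V < #B ∧
      ∀ v ∈ B, (a + 2 * η ^ 2) * #B ≤ #{w ∈ B | G.Adj v w} := by
  set n : ℝ := (Fintype.card V : ℝ)
  have hn0 : 0 ≤ n := Nat.cast_nonneg _
  obtain ⟨T, hTS, hTcard⟩ := exists_subset_card_eq (Nat.ceil_le.2 hS)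
  set s : ℝ := (#T : ℝ)
  have hs1 : η * n ≤ s := by simpa [s, hTcard] using Nat.le_ceil (η * n)
  have hs2 : s ≤ η * n + 1 := by
    simpa [s, hTcard] using (Nat.ceil_lt_add_one (by positivity : 0 ≤ η * n)).le
  have hA : (#(univ \ T) : ℝ) = n - s := by
    rw [card_sdiff_of_subset (subset_univ _), card_univ, Nat.cast_sub (card_le_univ T)]
  have hdegT : (∑ v ∈ T, G.degree v : ℝ) ≤ s * ((a - 5 * η) * n) := by
    simpa using sum_le_card_nsmul T (fun v => (G.degree v : ℝ)) _ fun v hv => hdeg v (hTS hv)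
  have hW : (2 * #G.edgeFinset : ℝ) ≤
      G.internalDegreeSum (univ \ T) + 2 * ∑ v ∈ T, (G.degree v : ℝ) := by
    exact_mod_cast G.internalDegreeSum_univ ▸ G.internalDegreeSum_le_sdiff_add univ T
  -- The hypothesis of the deletion lemma reduces to
  -- `a s² + 2η²(n - s)² + (1 - a - 2η²)(η²n)² + 3n ≤ 10ηns + s`; bound its terms one at a time.
  have hη2 : η ^ 2 * n ≤ η * n := by nlinarith
  have hs0 : 0 ≤ s := by positivity
  have hηns : 0 ≤ η * n * s := by positivity
  have hsq : a * s ^ 2 ≤ 2 * (η * n * s) := by nlinarith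
  have hmid : 2 * η ^ 2 * (n - s) ^ 2 ≤ 2 * (η * n * s) := by
    have : (n - s) ^ 2 ≤ n ^ 2 := by nlinarith
    nlinarith [mul_le_mul_of_nonneg_left hs1 (by positivity : 0 ≤ η * n)]
  have htail : (1 - (a + 2 * η ^ 2)) * (η ^ 2 * n) ^ 2 ≤ η * n * s := by
    have : (η ^ 2 * n) ^ 2 ≤ (η * n) ^ 2 := pow_le_pow_left₀ (by positivity) hη2 2
    nlinarith [mul_le_mul_of_nonneg_left hs1 (by positivity : 0 ≤ η * n)]
  have hlin : 3 * n ≤ η * n * s := by nlinarith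
  obtain ⟨B, -, hB⟩ := G.exists_subset_forall_mul_card_le_of_le_internalDegreeSum hc
    (by positivity : 0 < η ^ 2 * n) (univ \ T) (by
      rw [hA]
      linear_combination he + hW + 2 * hdegT + hsq + hmid + htail + hlin + hs0 + 4 * hηns)
  exact ⟨B, hB⟩

lemma ncard_setOf_ncard_neighborSet_le [Fintype V] (x : ℝ) :
    {v | ((G.neighborSet v).ncard : ℝ) ≤ x}.ncard = #{v | (G.degree v : ℝ) ≤ x} := by
  rw [← Set.ncard_coe_finset]
  congr with v
  simp [← card_neighborFinset_eq_degree, ← Set.ncard_coe_finset, coe_neighborFinset]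

end SimpleGraph

lemma card_filter_val_mod_eq_le {n p : ℕ} (hp : 0 < p) (k : ℕ) :
    #{w : Fin n | (w : ℕ) % p = k % p} ≤ n / p + 1 :=
  calc #{w : Fin n | (w : ℕ) % p = k % p} ≤ #{x ∈ range n | x ≡ k [MOD p]} :=
        card_le_card_of_injOn Fin.val
          (fun w hw => mem_filter.2 ⟨mem_range.2 w.isLt, (mem_filter.1 hw).2⟩)
          Fin.val_injective.injOn
    _ = n.count (· ≡ k [MOD p]) := (Nat.count_eq_card_filter_range _ _).symm
    _ ≤ n / p + 1 := by rw [Nat.count_modEq_card _ hp]; split_ifs <;> omega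

lemma le_degree_turanGraph_add {n p : ℕ} (hp : 0 < p) (v : Fin n) :
    n ≤ (turanGraph n p).degree v + (n / p + 1) := by
  have hsplit := card_filter_add_card_filter_not (s := (univ : Finset (Fin n)))
    fun w => (turanGraph n p).Adj v w
  simp only [turanGraph_adj, not_not, card_univ, Fintype.card_fin] at hsplit
  rw [← card_neighborFinset_eq_degree, neighborFinset_eq_filter]
  simp only [turanGraph_adj]
  simp_rw [eq_comm (a := (v : ℕ) % p)] at hsplit
  have := card_filter_val_mod_eq_le (n := n) hp v
  omega

lemma mul_le_two_mul_card_edgeFinset_turanGraph {n p : ℕ} (hp : 0 < p) :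
    n * n ≤ 2 * #(turanGraph n p).edgeFinset + n * (n / p + 1) := by
  rw [← sum_degrees_eq_twice_card_edges]
  calc n * n = ∑ _v : Fin n, n := by simp
    _ ≤ ∑ v : Fin n, ((turanGraph n p).degree v + (n / p + 1)) :=
        sum_le_sum fun v _ => le_degree_turanGraph_add hp v
    _ = _ := by simp [sum_add_distrib]

lemma one_sub_inv_mul_sq_sub_le_two_mul_card_edgeFinset {n p : ℕ} (hp : 2 ≤ p)
    (G : SimpleGraph (Fin n)) [DecidableRel G.Adj]
    (h : #(turanGraph n p).edgeFinset + 1 ≤ #G.edgeFinset + n / p) :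
    (1 - 1 / p : ℝ) * n ^ 2 - 2 * n ≤ 2 * #G.edgeFinset := by
  have hT := mul_le_two_mul_card_edgeFinset_turanGraph (n := n) (by omega : 0 < p)
  have hnat : (n ^ 2 + 2 : ℝ) ≤ 2 * #G.edgeFinset + (n + 2) * (n / p : ℕ) + n := by
    exact_mod_cast (by nlinarith : n ^ 2 + 2 ≤ 2 * #G.edgeFinset + (n + 2) * (n / p) + n)
  have hdiv : ((n / p : ℕ) : ℝ) ≤ n / p := Nat.cast_div_le
  have hp' : (2 : ℝ) ≤ p := by exact_mod_cast hp
  have hnp : (n + 2 : ℝ) * (n / p) ≤ n ^ 2 / p + n := by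
    have h2 : (2 * n : ℝ) / p ≤ n := by rw [div_le_iff₀ (by linarith)]; nlinarith
    linarith [show (n + 2 : ℝ) * (n / p) = n ^ 2 / p + 2 * n / p by ring]
  have := mul_le_mul_of_nonneg_left hdiv (by positivity : (0 : ℝ) ≤ n + 2)
  linarith [show (1 - 1 / p : ℝ) * n ^ 2 = n ^ 2 - n ^ 2 / p by ring]

lemma two_mul_sq_lt_one_div_of_lt {p q η : ℝ} (hp : 1 ≤ p) (hq : 1 ≤ q) (hη0 : 0 < η)
    (hη : η < 1 / (7 * p ^ 5 * q)) : 2 * η ^ 2 < 1 / p := by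
  have hpq : p ≤ p ^ 5 * q :=
    (le_self_pow₀ hp (by norm_num)).trans (le_mul_of_one_le_right (by positivity) hq)
  rw [lt_div_iff₀ (by positivity)] at hη
  rw [lt_div_iff₀ (by positivity)]
  nlinarith

/-- Lemma 2.4: for `p ≥ 3`, `q ≥ 1`, `0 < η < 1/(7p⁵q)` and `n` large, if `G` is an
`n`-vertex `B_{p,q}`-free graph with `e(G) ≥ e(T_{n,p}) - ⌊n/p⌋ + 1`, then the set
`S = {v : d_G(v) ≤ ((p-1)/p - 5η)n}` satisfies `|S| ≤ ηn`. -/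
theorem stmt12 (p q : ℕ) (hp : 3 ≤ p) (hq : 1 ≤ q) (η : ℝ) (hη0 : 0 < η)
    (hη : η < 1 / (7 * (p : ℝ) ^ 5 * q)) :
    ∃ n₀ : ℕ, ∀ n ≥ n₀, ∀ G : SimpleGraph (Fin n),
      ¬ CopyIn (completeSplitGraph p q) G →
      (turanGraph n p).edgeSet.ncard + 1 ≤ G.edgeSet.ncard + n / p →
      ({v : Fin n | ((G.neighborSet v).ncard : ℝ) ≤ (((p : ℝ) - 1) / p - 5 * η) * n}.ncard : ℝ)
        ≤ η * n := by
  classical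
  have hp' : (3 : ℝ) ≤ p := by exact_mod_cast hp
  have hpη : 2 * η ^ 2 < 1 / p :=
    two_mul_sq_lt_one_div_of_lt (by linarith) (by exact_mod_cast hq) hη0 hη
  have hη1 : η ≤ 1 := by nlinarith [one_div_le_one_div_of_le (by norm_num) hp']
  refine ⟨⌈(q + 3) / η ^ 4⌉₊, fun n hn G hfree hedge => ?_⟩
  have hlarge : q + 3 ≤ η ^ 4 * n := by
    rw [← div_le_iff₀' (by positivity)]; exact Nat.ceil_le.1 hn
  have hη4 : η ^ 4 * n ≤ η ^ 2 * n :=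
    mul_le_mul_of_nonneg_right (pow_le_pow_of_le_one hη0.le hη1 (by norm_num)) (by positivity)
  rw [← coe_edgeFinset, ← coe_edgeFinset, Set.ncard_coe_finset, Set.ncard_coe_finset] at hedge
  rw [G.ncard_setOf_ncard_neighborSet_le, show ((p : ℝ) - 1) / p = 1 - 1 / p by field_simp]
  by_contra! hS
  obtain ⟨B, hBcard, hB⟩ := G.exists_dense_subset_of_many_small_degrees (a := 1 - 1 / p)
    (sub_nonneg.2 (div_le_one_of_le₀ (by linarith) (by positivity))) (by linarith) hη0 hη1
    (by rw [Fintype.card_fin]; linarith)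
    (by simpa using one_sub_inv_mul_sq_sub_le_two_mul_card_edgeFinset (by omega) G hedge)
    (by simpa using hS.le) (fun v hv => by simpa using hv)
  rw [Fintype.card_fin] at hBcard
  refine hfree (G.copyIn_completeSplitGraph_of_forall_mul_card_le (by linarith) hB (by omega) ?_)
  rw [show 1 - p * (1 - (1 - 1 / p + 2 * η ^ 2)) = 2 * p * η ^ 2 by field_simp; ring]
  nlinarith [mul_le_mul_of_nonneg_left hBcard.le (by positivity : (0 : ℝ) ≤ 2 * p * η ^ 2)]
end

section
/- Let G be a connected graph on at least two vertices and let x be the positive unit eigenvector (Perron vector) of the adjacency matrix of G corresponding to the eigenvalue ρ(G). Let u and v be distinct vertices of G with x_u ≥ x_v, and let v_1, …, v_s (with s ≥ 1) be distinct neighbors of v, none of which equals u and none of which is adjacent to u. Let G′ be the graph obtained from G by deleting the edges vv_1, …, vv_s and adding the edges uv_1, …, uv_s. Then ρ(G′) > ρ(G). -/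
/-!
Let `A`, `A'` be the adjacency matrices of `G`, `G'`, let `d = e_u - e_v` and let `χ` be the
indicator vector of `T = {v₁, …, v_s}`. Moving the edges gives `A' = A + d χᵀ + χ dᵀ`, so
`xᵀ A' x = ρ(G) xᵀ x + 2 (x_u - x_v) ∑ x_{vᵢ} ≥ ρ(G) xᵀ x`. Since `ρ(G') I - A'` is positive
semidefinite, this gives `ρ(G') ≥ ρ(G)`, and equality would put `x` in its kernel, i.e.
`A' x = ρ(G) x`; but `(A' x)_u = ρ(G) x_u + ∑ x_{vᵢ} > ρ(G) x_u`.
-/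

open SimpleGraph

open Matrix

theorem Matrix.mem_spectrum_iff_exists_mulVec_eq_smul {K n : Type*} [Field K] [Fintype n]
    [DecidableEq n] {A : Matrix n n K} {μ : K} :
    μ ∈ spectrum K A ↔ ∃ x ≠ 0, A *ᵥ x = μ • x := by
  rw [← spectrum_toLin', ← Module.End.hasEigenvalue_iff_mem_spectrum,
    Module.End.hasEigenvalue_iff, Submodule.ne_bot_iff]
  simp only [Module.End.mem_eigenspace_iff, toLin'_apply]
  exact exists_congr fun x => and_comm

section Rayleigh

variable {n : Type*} [Fintype n] [DecidableEq n] {A : Matrix n n ℝ}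

theorem Matrix.IsHermitian.posSemidef_smul_one_sub (hA : A.IsHermitian) {L : ℝ}
    (hL : ∀ μ ∈ spectrum ℝ A, μ ≤ L) : (L • 1 - A).PosSemidef := by
  refine posSemidef_iff_isHermitian_and_spectrum_nonneg.mpr ⟨?_, ?_⟩
  · exact (isHermitian_one.smul (IsSelfAdjoint.all L)).sub hA
  · rw [← Algebra.algebraMap_eq_smul_one, ← spectrum.singleton_sub_eq]
    rintro _ ⟨_, rfl, μ, hμ, rfl⟩
    simpa using hL μ hμ

theorem Matrix.IsHermitian.lt_sSup_spectrum (hA : A.IsHermitian) {x : n → ℝ} {c : ℝ}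
    (hc : c * (x ⬝ᵥ x) ≤ x ⬝ᵥ A *ᵥ x) (hx : A *ᵥ x ≠ c • x) :
    c < sSup (spectrum ℝ A) := by
  set L := sSup (spectrum ℝ A)
  by_contra! hLc
  have hP := hA.posSemidef_smul_one_sub fun μ hμ => le_csSup A.finite_spectrum.bddAbove hμ
  have hxx : 0 < x ⬝ᵥ x := by
    refine dotProduct_star_self_pos_iff.mpr fun hx0 => hx ?_
    simp [hx0]
  have hquad : x ⬝ᵥ (L • 1 - A) *ᵥ x = L * (x ⬝ᵥ x) - x ⬝ᵥ A *ᵥ x := by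
    simp [sub_mulVec, dotProduct_sub, smul_mulVec]
  have hzero : x ⬝ᵥ (L • 1 - A) *ᵥ x = 0 := by
    have := hP.dotProduct_mulVec_nonneg x
    simp only [star_trivial] at this
    nlinarith
  have hAx : A *ᵥ x = L • x := by
    have := (hP.dotProduct_mulVec_zero_iff x).mp (by simpa using hzero)
    simpa [sub_mulVec, smul_mulVec, sub_eq_zero, eq_comm] using this
  have hcL : c ≤ L := by
    rw [hAx, dotProduct_smul, smul_eq_mul] at hc
    exact le_of_mul_le_mul_right hc hxx
  exact hx (hAx.trans (by rw [le_antisymm hLc hcL]))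

end Rayleigh

theorem graphSpecRad_eq_sSup_spectrum {V : Type*} [Fintype V] [DecidableEq V]
    (G : SimpleGraph V) [DecidableRel G.Adj] :
    graphSpecRad G = sSup (spectrum ℝ (G.adjMatrix ℝ)) := by
  rw [graphSpecRad, Subsingleton.elim (Classical.decRel G.Adj) ‹_›]
  congr 1
  ext t
  exact mem_spectrum_iff_exists_mulVec_eq_smul.symm

namespace SimpleGraph

variable {V : Type*}

/-- `G'` arises from `G` by replacing the edges `v t` by `u t` for `t ∈ T`. -/
def IsEdgeRotation (G G' : SimpleGraph V) (v u : V) (T : Finset V) : Prop :=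
  ∀ a b, G'.Adj a b ↔ (G.Adj a b ∧ ¬((a = v ∧ b ∈ T) ∨ (b = v ∧ a ∈ T))) ∨
    ((a = u ∧ b ∈ T) ∨ (b = u ∧ a ∈ T))

namespace IsEdgeRotation

variable {G G' : SimpleGraph V} {v u : V} {T : Finset V}

theorem notMem (h : G.IsEdgeRotation G' v u T) : u ∉ T :=
  fun hu => G'.irrefl ((h u u).2 (Or.inr (Or.inl ⟨rfl, hu⟩)))

variable [DecidableEq V] [DecidableRel G.Adj] [DecidableRel G'.Adj]

theorem adjMatrix_eq {R : Type*} [NonAssocRing R] (h : G.IsEdgeRotation G' v u T)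
    (hTv : ∀ t ∈ T, G.Adj v t) (hTu : ∀ t ∈ T, ¬ G.Adj u t) :
    G'.adjMatrix R = G.adjMatrix R
      + vecMulVec (Pi.single u 1 - Pi.single v 1) (fun b => if b ∈ T then 1 else 0)
      + vecMulVec (fun b => if b ∈ T then 1 else 0) (Pi.single u 1 - Pi.single v 1) := by
  have hu := h.notMem
  have hv : v ∉ T := fun hv => G.irrefl (hTv v hv)
  have hTv' : ∀ t ∈ T, G.Adj t v := fun t ht => (hTv t ht).symm
  have hTu' : ∀ t ∈ T, ¬ G.Adj t u := fun t ht h => hTu t ht h.symm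
  ext a b
  simp only [Matrix.add_apply, vecMulVec_apply, adjMatrix_apply, h a b, Pi.sub_apply,
    Pi.single_apply]
  by_cases hav : a = v <;> by_cases hau : a = u <;> by_cases hbv : b = v <;> by_cases hbu : b = u
    <;> by_cases haT : a ∈ T <;> by_cases hbT : b ∈ T <;> simp_all

variable [Fintype V] {R : Type*} [CommRing R]

theorem adjMatrix_mulVec (h : G.IsEdgeRotation G' v u T) (hTv : ∀ t ∈ T, G.Adj v t)
    (hTu : ∀ t ∈ T, ¬ G.Adj u t) (x : V → R) :
    G'.adjMatrix R *ᵥ x = G.adjMatrix R *ᵥ x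
      + (∑ t ∈ T, x t) • (Pi.single u 1 - Pi.single v 1)
      + (x u - x v) • fun b => if b ∈ T then 1 else 0 := by
  have hχ : (fun b => if b ∈ T then (1 : R) else 0) ⬝ᵥ x = ∑ t ∈ T, x t := by
    simp [dotProduct, ite_mul, Finset.sum_ite_mem]
  rw [h.adjMatrix_eq hTv hTu, add_mulVec, add_mulVec, vecMulVec_mulVec, vecMulVec_mulVec,
    op_smul_eq_smul, op_smul_eq_smul, hχ, sub_dotProduct, single_one_dotProduct,
    single_one_dotProduct]

theorem dotProduct_adjMatrix_mulVec (h : G.IsEdgeRotation G' v u T)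
    (hTv : ∀ t ∈ T, G.Adj v t) (hTu : ∀ t ∈ T, ¬ G.Adj u t) (x : V → R) :
    x ⬝ᵥ G'.adjMatrix R *ᵥ x = x ⬝ᵥ G.adjMatrix R *ᵥ x + 2 * (x u - x v) * ∑ t ∈ T, x t := by
  have hχ : x ⬝ᵥ (fun b => if b ∈ T then (1 : R) else 0) = ∑ t ∈ T, x t := by
    simp [dotProduct, mul_ite, Finset.sum_ite_mem]
  rw [h.adjMatrix_mulVec hTv hTu, dotProduct_add, dotProduct_add, dotProduct_smul, dotProduct_smul,
    dotProduct_sub, dotProduct_single_one, dotProduct_single_one, hχ, smul_eq_mul, smul_eq_mul]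
  ring

theorem adjMatrix_mulVec_apply_target (h : G.IsEdgeRotation G' v u T)
    (hTv : ∀ t ∈ T, G.Adj v t) (hTu : ∀ t ∈ T, ¬ G.Adj u t) (huv : u ≠ v) (x : V → R) :
    (G'.adjMatrix R *ᵥ x) u = (G.adjMatrix R *ᵥ x) u + ∑ t ∈ T, x t := by
  rw [h.adjMatrix_mulVec hTv hTu]
  simp [huv, h.notMem]

end IsEdgeRotation

end SimpleGraph

theorem stmt16_general {V : Type*} [Fintype V] [DecidableEq V] (G : SimpleGraph V)
    [DecidableRel G.Adj]
    (x : V → ℝ) (hpos : ∀ w, 0 < x w)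
    (heig : (G.adjMatrix ℝ).mulVec x = graphSpecRad G • x)
    (u v : V) (huv : u ≠ v) (hx : x v ≤ x u)
    (s : ℕ) (hs : 1 ≤ s) (f : Fin s → V)
    (hnbr : ∀ i, G.Adj v (f i)) (hnadj : ∀ i, ¬ G.Adj u (f i))
    (G' : SimpleGraph V)
    (hG' : ∀ a b, G'.Adj a b ↔
      ((G.Adj a b ∧ ¬((a = v ∧ ∃ i, b = f i) ∨ (b = v ∧ ∃ i, a = f i)))
        ∨ ((a = u ∧ ∃ i, b = f i) ∨ (b = u ∧ ∃ i, a = f i)))) :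
    graphSpecRad G < graphSpecRad G' := by
  classical
  set T := Finset.univ.image f
  have hrot : G.IsEdgeRotation G' v u T := by
    simpa only [IsEdgeRotation, T, Finset.mem_image, Finset.mem_univ, true_and, eq_comm] using hG'
  have hTv : ∀ t ∈ T, G.Adj v t := by simpa [T] using hnbr
  have hTu : ∀ t ∈ T, ¬ G.Adj u t := by simpa [T] using hnadj
  have hS : 0 < ∑ t ∈ T, x t :=
    Finset.sum_pos (fun t _ => hpos t) ((Finset.univ_nonempty_iff.mpr ⟨⟨0, hs⟩⟩).image f)
  rw [graphSpecRad_eq_sSup_spectrum G']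
  refine (G'.isHermitian_adjMatrix ℝ).lt_sSup_spectrum (x := x) ?_ ?_
  · rw [hrot.dotProduct_adjMatrix_mulVec hTv hTu, heig, dotProduct_smul, smul_eq_mul]
    nlinarith [sub_nonneg.mpr hx]
  · intro hρ
    have hu := congrFun hρ u
    rw [hrot.adjMatrix_mulVec_apply_target hTv hTu huv, heig] at hu
    simp only [Pi.smul_apply, smul_eq_mul] at hu
    linarith

/-- (Wu–Xiao–Hong) Let `G` be a connected graph (on at least two vertices) with Perron
vector `x` (a positive unit eigenvector for `ρ(G)`). Suppose `x u ≥ x v`, and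
`v₁, …, v_s` (`s ≥ 1`, given as an injective `f : Fin s → V`) are distinct neighbors of `v`,
each different from `u` and not adjacent to `u`. If `G'` is obtained from `G` by deleting
the edges `v vᵢ` and adding the edges `u vᵢ`, then `ρ(G') > ρ(G)`. -/
theorem stmt16 {V : Type*} [Fintype V] [DecidableEq V] (G : SimpleGraph V)
    [DecidableRel G.Adj] (hconn : G.Connected) (hcard : 2 ≤ Fintype.card V)
    (x : V → ℝ) (hpos : ∀ w, 0 < x w) (hunit : ∑ w, x w ^ 2 = 1)
    (heig : (G.adjMatrix ℝ).mulVec x = graphSpecRad G • x)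
    (u v : V) (huv : u ≠ v) (hx : x v ≤ x u)
    (s : ℕ) (hs : 1 ≤ s) (f : Fin s → V) (hinj : Function.Injective f)
    (hnbr : ∀ i, G.Adj v (f i)) (hfu : ∀ i, f i ≠ u) (hnadj : ∀ i, ¬ G.Adj u (f i))
    (G' : SimpleGraph V)
    (hG' : ∀ a b, G'.Adj a b ↔
      ((G.Adj a b ∧ ¬((a = v ∧ ∃ i, b = f i) ∨ (b = v ∧ ∃ i, a = f i)))
        ∨ ((a = u ∧ ∃ i, b = f i) ∨ (b = u ∧ ∃ i, a = f i)))) :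
    graphSpecRad G < graphSpecRad G' :=
  stmt16_general G x hpos heig u v huv hx s hs f hnbr hnadj G' hG'
end
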